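/- arXiv:2006.08859 — 9 statements merged into one kernel-verified Lean document; each statement's English description precedes it below -/
import Mathlib

section
/- Let σ : ℝ² → ℝ² be coordinatewise ReLU and let φ(x) = Ax + b be an invertible affine transformation of ℝ² with rows a₁, a₂ of A and components b₁, b₂ of b. Set S = {x : ⟨a₁,x⟩ + b₁ ≥ 0, ⟨a₂,x⟩ + b₂ ≥ 0}. Then for every x ∈ ℝ² \ S, the point x' = φ⁻¹(σ(φ(x))) satisfies x' ≠ x and x' ∈ ∂S, the topological boundary of S. -/
theorem stmt_5 (A : Matrix (Fin 2) (Fin 2) ℝ) (hA : IsUnit A.det) (b : Fin 2 → ℝ)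
    (x : Fin 2 → ℝ)
    (hx : x ∉ {y : Fin 2 → ℝ | ∀ i, 0 ≤ A.mulVec y i + b i}) :
    A⁻¹.mulVec ((fun i => max (A.mulVec x i + b i) 0) - b) ≠ x ∧
      A⁻¹.mulVec ((fun i => max (A.mulVec x i + b i) 0) - b) ∈
        frontier {y : Fin 2 → ℝ | ∀ i, 0 ≤ A.mulVec y i + b i} := by
  simp only [Set.mem_setOf_eq, not_forall, not_le] at hx
  obtain ⟨i, hi⟩ := hx
  set σv : Fin 2 → ℝ := fun i => max (A.mulVec x i + b i) 0 with hσv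
  set x' : Fin 2 → ℝ := A⁻¹.mulVec (σv - b) with hx'
  have hAx' : A.mulVec x' = σv - b := by
    rw [hx', Matrix.mulVec_mulVec, Matrix.mul_nonsing_inv _ hA, Matrix.one_mulVec]
  have key : ∀ j, A.mulVec x' j + b j = σv j := by
    intro j
    rw [hAx', Pi.sub_apply]; ring
  have hσi : σv i = 0 := max_eq_right hi.le
  have hmemS : x' ∈ {y : Fin 2 → ℝ | ∀ i, 0 ≤ A.mulVec y i + b i} := by
    intro j; rw [key j]; exact le_max_right _ _
  constructor
  · intro heq
    have := key i
    rw [heq, hσi] at this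
    linarith
  · refine ⟨subset_closure hmemS, ?_⟩
    intro hmem
    rw [mem_interior_iff_mem_nhds, Metric.mem_nhds_iff] at hmem
    obtain ⟨ε, hε, hball⟩ := hmem
    set u : Fin 2 → ℝ := A⁻¹.mulVec (Pi.single i 1) with hu
    have hAu : A.mulVec u = Pi.single i 1 := by
      rw [hu, Matrix.mulVec_mulVec, Matrix.mul_nonsing_inv _ hA, Matrix.one_mulVec]
    have hun : (0:ℝ) ≤ ‖u‖ := norm_nonneg _
    set t : ℝ := ε / (2 * (‖u‖ + 1)) with ht
    have htpos : 0 < t := by positivity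
    set y : Fin 2 → ℝ := x' - t • u with hy
    have hyball : y ∈ Metric.ball x' ε := by
      rw [Metric.mem_ball, dist_eq_norm]
      have : y - x' = -(t • u) := by rw [hy]; abel
      rw [this, norm_neg, norm_smul, Real.norm_eq_abs, abs_of_pos htpos]
      have h1 : t * (‖u‖ + 1) = ε / 2 := by
        rw [ht]; field_simp
      nlinarith
    have hyS := hball hyball
    have hyi : A.mulVec y i + b i = -t := by
      have : A.mulVec y = A.mulVec x' - t • A.mulVec u := by
        rw [hy, Matrix.mulVec_sub, Matrix.mulVec_smul]
      rw [this]
      have := key i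
      simp only [Pi.sub_apply, Pi.smul_apply, hAu, Pi.single_eq_same, smul_eq_mul, mul_one]
      linarith [key i, hσi.symm ▸ key i]
    have := hyS i
    rw [hyi] at this
    linarith
end

section
/- Let σ be coordinatewise ReLU on ℝ² and φ an invertible affine transformation of ℝ². Let T ⊂ ℝ² and x ∈ ℝ² be such that x lies in a bounded path-connected component of ℝ² \ T. Write x' = φ⁻¹(σ(φ(x))) and T' = φ⁻¹(σ(φ(T))). If x' ≠ x, then x' ∈ T'. -/
/-!
Write `y = A x + b` and let `y⁻` be its negative part. Moving `x` in the direction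
`-A⁻¹ y⁻` only pushes the negative coordinates of `y` further down, so ReLU ignores the move:
`Φ` is constant on the ray `x - t A⁻¹ y⁻`, `t ≥ 0`. When `Φ x ≠ x` we have `y⁻ ≠ 0`, so this ray is
a genuine unbounded ray. If `Φ x ∉ Φ '' T` the ray avoids `T` and lies in the path component of `x`
in `Tᶜ`, contradicting boundedness.
-/

open Bornology Matrix

section Ray

variable {E : Type*} [NormedAddCommGroup E] [NormedSpace ℝ E] {s : Set E} {x v : E}

theorem not_isBounded_of_ray_subset (hv : v ≠ 0) (hs : ∀ t : ℝ, 0 ≤ t → x + t • v ∈ s) :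
    ¬IsBounded s := by
  rintro hb
  obtain ⟨C, hC⟩ := hb.exists_norm_le
  have hxC : ‖x‖ ≤ C := by simpa using hC _ (hs 0 le_rfl)
  have hv' : 0 < ‖v‖ := norm_pos_iff.mpr hv
  set t := (C + ‖x‖ + 1) / ‖v‖
  have ht : 0 ≤ t := div_nonneg (by linarith [norm_nonneg x]) hv'.le
  have htv : ‖t • v‖ = C + ‖x‖ + 1 := by
    rw [norm_smul, Real.norm_of_nonneg ht, div_mul_cancel₀ _ hv'.ne']
  have := calc ‖t • v‖ = ‖(x + t • v) - x‖ := by rw [add_sub_cancel_left]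
    _ ≤ ‖x + t • v‖ + ‖x‖ := norm_sub_le _ _
  linarith [hC _ (hs t ht)]

theorem joinedIn_add_smul_of_ray_subset (hs : ∀ t : ℝ, 0 ≤ t → x + t • v ∈ s) {t : ℝ}
    (ht : 0 ≤ t) : JoinedIn s x (x + t • v) := by
  refine JoinedIn.of_segment_subset ?_
  rw [segment_eq_image']
  rintro _ ⟨θ, hθ, rfl⟩
  simpa [smul_smul] using hs (θ * t) (mul_nonneg hθ.1 ht)

theorem not_isBounded_setOf_joinedIn_of_ray_subset (hv : v ≠ 0)
    (hs : ∀ t : ℝ, 0 ≤ t → x + t • v ∈ s) : ¬IsBounded {y | JoinedIn s x y} :=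
  not_isBounded_of_ray_subset hv fun _ ht => joinedIn_add_smul_of_ray_subset hs ht

theorem mem_image_of_isBounded_setOf_joinedIn_compl {α : Type*} {Φ : E → α} {T : Set E}
    (hbdd : IsBounded {y | JoinedIn Tᶜ x y}) (hv : v ≠ 0)
    (hΦ : ∀ t : ℝ, 0 ≤ t → Φ (x + t • v) = Φ x) : Φ x ∈ Φ '' T := by
  by_contra h
  exact not_isBounded_setOf_joinedIn_of_ray_subset (s := Tᶜ) hv
    (fun t ht hT => h ⟨_, hT, hΦ t ht⟩) hbdd

end Ray

theorem posPart_sub_mul_negPart {α : Type*} [Field α] [LinearOrder α] [IsStrictOrderedRing α]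
    (a : α) {s : α} (hs : 0 ≤ s) : (a - s * a⁻)⁺ = a⁺ := by
  rcases le_total 0 a with ha | ha
  · simp [negPart_eq_zero.mpr ha]
  · rw [negPart_eq_neg.mpr ha, posPart_eq_zero.mpr ha, posPart_eq_zero]
    nlinarith

theorem Pi.posPart_sub_smul_negPart {ι α : Type*} [Field α] [LinearOrder α]
    [IsStrictOrderedRing α] (y : ι → α) {s : α} (hs : 0 ≤ s) : (y - s • y⁻)⁺ = y⁺ := by
  funext i
  simpa using posPart_sub_mul_negPart (y i) hs

section AffineReLU

variable {ι : Type*} [Fintype ι] [DecidableEq ι] {A : Matrix ι ι ℝ} {b x : ι → ℝ}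

/-- `φ⁻¹ ∘ σ ∘ φ` for the affine map `φ z = A z + b` and the coordinatewise ReLU `σ`. -/
noncomputable def affineReLU (A : Matrix ι ι ℝ) (b z : ι → ℝ) : ι → ℝ :=
  A⁻¹ *ᵥ ((A *ᵥ z + b)⁺ - b)

theorem affineReLU_sub_smul_negPart (hA : IsUnit A.det) {t : ℝ} (ht : 0 ≤ t) :
    affineReLU A b (x - t • A⁻¹ *ᵥ (A *ᵥ x + b)⁻) = affineReLU A b x := by
  have hφ : A *ᵥ (x - t • A⁻¹ *ᵥ (A *ᵥ x + b)⁻) + b = (A *ᵥ x + b) - t • (A *ᵥ x + b)⁻ := by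
    rw [mulVec_sub, mulVec_smul, mulVec_mulVec, mul_nonsing_inv A hA, one_mulVec]
    abel
  rw [affineReLU, hφ, Pi.posPart_sub_smul_negPart _ ht, affineReLU]

theorem affineReLU_eq_self_of_negPart_eq_zero (hA : IsUnit A.det) (h : (A *ᵥ x + b)⁻ = 0) :
    affineReLU A b x = x := by
  rw [affineReLU, posPart_eq_self.mpr (negPart_eq_zero.mp h), add_sub_cancel_right,
    mulVec_mulVec, nonsing_inv_mul A hA, one_mulVec]

theorem exists_ray_affineReLU_eq (hA : IsUnit A.det) (hx : affineReLU A b x ≠ x) :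
    ∃ v ≠ 0, ∀ t : ℝ, 0 ≤ t → affineReLU A b (x + t • v) = affineReLU A b x := by
  refine ⟨-(A⁻¹ *ᵥ (A *ᵥ x + b)⁻), fun hv => hx ?_, fun t ht => ?_⟩
  · refine affineReLU_eq_self_of_negPart_eq_zero hA ?_
    rw [neg_eq_zero] at hv
    rw [← one_mulVec (A *ᵥ x + b)⁻, ← mul_nonsing_inv A hA, ← mulVec_mulVec, hv, mulVec_zero]
  · rw [smul_neg, ← sub_eq_add_neg, affineReLU_sub_smul_negPart hA ht]

end AffineReLU

theorem stmt_6_general (A : Matrix (Fin 2) (Fin 2) ℝ) (hA : IsUnit A.det) (b : Fin 2 → ℝ)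
    (T : Set (Fin 2 → ℝ)) (x : Fin 2 → ℝ)
    (hbdd : Bornology.IsBounded {y | JoinedIn Tᶜ x y})
    (Φ : (Fin 2 → ℝ) → (Fin 2 → ℝ))
    (hΦ : Φ = fun z => A⁻¹.mulVec ((fun i => max (A.mulVec z i + b i) 0) - b))
    (hne : Φ x ≠ x) :
    Φ x ∈ Φ '' T := by
  obtain rfl : Φ = affineReLU A b := hΦ
  obtain ⟨v, hv, hray⟩ := exists_ray_affineReLU_eq hA hne
  exact mem_image_of_isBounded_setOf_joinedIn_compl hbdd hv hray

theorem stmt_6 (A : Matrix (Fin 2) (Fin 2) ℝ) (hA : IsUnit A.det) (b : Fin 2 → ℝ)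
    (T : Set (Fin 2 → ℝ)) (x : Fin 2 → ℝ) (hxT : x ∈ Tᶜ)
    (hbdd : Bornology.IsBounded {y | JoinedIn Tᶜ x y})
    (Φ : (Fin 2 → ℝ) → (Fin 2 → ℝ))
    (hΦ : Φ = fun z => A⁻¹.mulVec ((fun i => max (A.mulVec z i + b i) 0) - b))
    (hne : Φ x ≠ x) :
    Φ x ∈ Φ '' T :=
  stmt_6_general A hA b T x hbdd Φ hΦ hne
end

section
/- Let Δ ⊂ ℝ^m be a regular m-simplex with side length √2, with vertices v₀, ..., v_m. Then for every affine hyperplane H ⊂ ℝ^m of dimension m−1, max_{i ∈ {0,...,m}} dist(v_i, H) ≥ Vol_m(Δ) / (2 · Vol_{m−1}(B^{m−1})), where Vol_m(Δ) = √(m+1)/m! and B^{m−1} is the closed unit ball in ℝ^{m−1}. -/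
/-!
The vertices of a regular simplex of side `√2` in `ℝ^m`, centred at their barycentre, form a
tight frame: for every vector `x`, `(m + 1) ∑ ⟪v i, x⟫² - (∑ ⟪v i, x⟫)² = (m + 1) ‖x‖²`. This
follows by writing `x` in the basis of edge vectors `v (i+1) - v 0`, whose Gram matrix is `I + J`.
By Popoviciu's bound on the variance of numbers lying in an interval, the simplex therefore has
width at least `2 / √(m + 1)` in every unit direction, so every hyperplane lies at distance at least
`1 / √(m + 1)` from some vertex. Finally `1 / √(m + 1)` dominates the volumetric bound, because
`(m + 1) Γ((m + 1) / 2) = 2 Γ((m + 3) / 2) ≤ 2 m!` by monotonicity of `Γ` on `[2, ∞)`.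
-/

open MeasureTheory Finset Module
open scoped RealInnerProductSpace

lemma volume_closedBall_euclideanSpace_fin_zero (x : EuclideanSpace ℝ (Fin 0)) {r : ℝ}
    (hr : 0 ≤ r) : volume (Metric.closedBall x r) = 1 := by
  rw [Set.eq_univ_of_forall fun y => Metric.mem_closedBall.mpr (by simpa [Subsingleton.elim y x]),
    ← (PiLp.volume_preserving_toLp (Fin 0)).measure_preimage MeasurableSet.univ.nullMeasurableSet]
  simp [volume_pi]

lemma succ_succ_le_two_mul_factorial_mul_volume_closedBall (n : ℕ) :
    (n + 2 : ℝ) ≤ 2 * (n + 1).factorial *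
      (volume (Metric.closedBall (0 : EuclideanSpace ℝ (Fin n)) 1)).toReal := by
  rcases Nat.eq_zero_or_pos n with rfl | hn
  · rw [volume_closedBall_euclideanSpace_fin_zero _ zero_le_one]
    norm_num
  have : Nonempty (Fin n) := ⟨⟨0, hn⟩⟩
  have hΓ : 0 < Real.Gamma (n / 2 + 1) := Real.Gamma_pos_of_pos (by positivity)
  rw [EuclideanSpace.volume_closedBall, Fintype.card_fin, ENNReal.ofReal_one, one_pow, one_mul,
    ENNReal.toReal_ofReal (by positivity), mul_div_assoc', le_div_iff₀ hΓ]
  have hrec : (n + 2 : ℝ) * Real.Gamma (n / 2 + 1) = 2 * Real.Gamma (n / 2 + 1 + 1) := by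
    rw [Real.Gamma_add_one (s := n / 2 + 1) (by positivity)]; ring
  have hmono : Real.Gamma (n / 2 + 1 + 1) ≤ Real.Gamma (n + 1 + 1) := by
    have h0 : (0 : ℝ) ≤ n / 2 := by positivity
    exact Real.Gamma_strictMonoOn_Ici.monotoneOn (Set.mem_Ici.mpr (by linarith))
      (Set.mem_Ici.mpr (by linarith)) (by linarith)
  have hfact : Real.Gamma (n + 1 + 1) = (n + 1).factorial := by
    exact_mod_cast Real.Gamma_nat_eq_factorial (n + 1)
  have hπ : 1 ≤ √Real.pi ^ n :=
    one_le_pow₀ (Real.one_le_sqrt.mpr (by linarith [Real.pi_gt_three]))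
  calc (n + 2 : ℝ) * Real.Gamma (n / 2 + 1) ≤ 2 * (n + 1).factorial := by
        rw [hrec, ← hfact]; linarith
    _ ≤ 2 * (n + 1).factorial * √Real.pi ^ n := le_mul_of_one_le_right (by positivity) hπ

lemma sqrt_div_factorial_div_volume_closedBall_le {m : ℕ} (hm : 1 ≤ m) :
    √(m + 1) / m.factorial /
        (2 * (volume (Metric.closedBall (0 : EuclideanSpace ℝ (Fin (m - 1))) 1)).toReal)
      ≤ 1 / √(m + 1) := by
  obtain ⟨n, rfl⟩ := Nat.exists_eq_add_of_le' hm
  have hV := succ_succ_le_two_mul_factorial_mul_volume_closedBall n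
  set V := (volume (Metric.closedBall (0 : EuclideanSpace ℝ (Fin n)) 1)).toReal
  have hVpos : 0 < V :=
    pos_of_mul_pos_right (by linarith) (by positivity : (0 : ℝ) ≤ 2 * (n + 1).factorial)
  rw [div_div, div_le_div_iff₀ (by positivity) (by positivity), one_mul,
    Real.mul_self_sqrt (by positivity)]
  push_cast
  linarith

section Gram

variable {E : Type*} [NormedAddCommGroup E] [InnerProductSpace ℝ E]
  {ι : Type*} [Fintype ι] [DecidableEq ι] {w : ι → E}

lemma inner_sum_smul_of_inner_eq_ite (hw : ∀ i j, ⟪w i, w j⟫ = if i = j then 2 else 1)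
    (c : ι → ℝ) (j : ι) : ⟪w j, ∑ i, c i • w i⟫ = c j + ∑ i, c i := by
  have hsplit : ∀ i, c i * ⟪w j, w i⟫ = c i + if j = i then c i else 0 := by
    intro i; rw [hw]; split_ifs <;> ring
  simp_rw [inner_sum, real_inner_smul_right, hsplit, sum_add_distrib, sum_ite_eq,
    if_pos (mem_univ j)]
  ring

lemma norm_sq_sum_smul_of_inner_eq_ite (hw : ∀ i j, ⟪w i, w j⟫ = if i = j then 2 else 1)
    (c : ι → ℝ) : ‖∑ i, c i • w i‖ ^ 2 = ∑ i, c i ^ 2 + (∑ i, c i) ^ 2 := by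
  rw [← real_inner_self_eq_norm_sq, sum_inner]
  simp_rw [real_inner_smul_left, inner_sum_smul_of_inner_eq_ite hw, mul_add, sum_add_distrib,
    ← sum_mul, sq]

lemma linearIndependent_of_inner_eq_ite (hw : ∀ i j, ⟪w i, w j⟫ = if i = j then 2 else 1) :
    LinearIndependent ℝ w := by
  rw [Fintype.linearIndependent_iff]
  intro c hc i
  have h := norm_sq_sum_smul_of_inner_eq_ite hw c
  rw [hc, norm_zero, sq, zero_mul] at h
  have hsq : ∑ i, c i ^ 2 = 0 := by
    nlinarith [sum_nonneg fun i (_ : i ∈ univ) => sq_nonneg (c i), sq_nonneg (∑ i, c i)]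
  exact pow_eq_zero_iff two_ne_zero |>.mp <|
    (sum_eq_zero_iff_of_nonneg fun j _ => sq_nonneg (c j)).mp hsq i (mem_univ i)

lemma card_add_one_mul_norm_sq_of_inner_eq_ite [FiniteDimensional ℝ E]
    (hw : ∀ i j, ⟪w i, w j⟫ = if i = j then 2 else 1) (hE : finrank ℝ E = Fintype.card ι)
    (x : E) : (Fintype.card ι + 1) * ‖x‖ ^ 2 =
      (Fintype.card ι + 1) * ∑ i, ⟪w i, x⟫ ^ 2 - (∑ i, ⟪w i, x⟫) ^ 2 := by
  have hspan := (linearIndependent_of_inner_eq_ite hw).span_eq_top_of_card_eq_finrank' hE.symm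
  obtain ⟨c, rfl⟩ :=
    (Submodule.mem_span_range_iff_exists_fun ℝ).mp (hspan ▸ Submodule.mem_top (x := x))
  simp only [inner_sum_smul_of_inner_eq_ite hw, norm_sq_sum_smul_of_inner_eq_ite hw, add_sq,
    sum_add_distrib, sum_const, card_univ, ← sum_mul, ← mul_sum, nsmul_eq_mul]
  ring

end Gram

lemma card_mul_sum_sq_sub_sq_sum_le {ι : Type*} [Fintype ι] {f : ι → ℝ} {X Y : ℝ}
    (hX : ∀ i, f i ≤ X) (hY : ∀ i, Y ≤ f i) :
    Fintype.card ι * ∑ i, f i ^ 2 - (∑ i, f i) ^ 2 ≤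
      Fintype.card ι ^ 2 * (X - Y) ^ 2 / 4 := by
  have hprod : 0 ≤ ∑ i, (f i - Y) * (X - f i) :=
    sum_nonneg fun i _ => mul_nonneg (sub_nonneg.2 (hY i)) (sub_nonneg.2 (hX i))
  have hexpand : ∑ i, (f i - Y) * (X - f i) =
      (X + Y) * ∑ i, f i - ∑ i, f i ^ 2 - Fintype.card ι * (X * Y) := by
    simp only [show ∀ i, (f i - Y) * (X - f i) = (X + Y) * f i - f i ^ 2 - X * Y from
      fun i => by ring, sum_sub_distrib, ← mul_sum, sum_const, card_univ, nsmul_eq_mul]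
    ring
  rw [hexpand] at hprod
  nlinarith [mul_nonneg (Nat.cast_nonneg (α := ℝ) (Fintype.card ι)) hprod,
    sq_nonneg (∑ i, f i - Fintype.card ι * (X + Y) / 2)]

section Simplex

variable {E : Type*} [NormedAddCommGroup E] [InnerProductSpace ℝ E] {m : ℕ}
  {v : Fin (m + 1) → E}

lemma inner_sub_sub_of_dist_eq_sqrt_two (hv : ∀ i j, i ≠ j → dist (v i) (v j) = √2)
    (i j : Fin m) : ⟪v i.succ - v 0, v j.succ - v 0⟫ = if i = j then 2 else 1 := by
  have hedge : ∀ a b, a ≠ b → ‖v a - v b‖ ^ 2 = 2 := fun a b hab => by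
    rw [← dist_eq_norm, hv a b hab, Real.sq_sqrt zero_le_two]
  split_ifs with hij
  · rw [hij, real_inner_self_eq_norm_sq, hedge _ _ (Fin.succ_ne_zero j)]
  · have hdiff := norm_sub_sq_real (v i.succ - v 0) (v j.succ - v 0)
    rw [sub_sub_sub_cancel_right, hedge _ _ (Fin.succ_ne_zero i),
      hedge _ _ (Fin.succ_ne_zero j), hedge _ _ (Fin.succ_injective _ |>.ne hij)] at hdiff
    linarith

lemma exists_le_inner_sub_of_dist_eq_sqrt_two [FiniteDimensional ℝ E] (hE : finrank ℝ E = m)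
    (hv : ∀ i j, i ≠ j → dist (v i) (v j) = √2) {x : E} (hx : ‖x‖ = 1) :
    ∃ i j, 2 / √(m + 1) ≤ ⟪v i - v j, x⟫ := by
  set d : Fin (m + 1) → ℝ := fun i => ⟪v i - v 0, x⟫ with hd
  have hvar : (m + 1 : ℝ) * ‖x‖ ^ 2 = (m + 1) * ∑ i, d i ^ 2 - (∑ i, d i) ^ 2 := by
    have := card_add_one_mul_norm_sq_of_inner_eq_ite (inner_sub_sub_of_dist_eq_sqrt_two hv)
      (hE.trans (Fintype.card_fin m).symm) x
    simpa [Fin.sum_univ_succ, hd] using this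
  obtain ⟨I, -, hI⟩ := exists_max_image univ d univ_nonempty
  obtain ⟨J, -, hJ⟩ := exists_min_image univ d univ_nonempty
  have hspread := card_mul_sum_sq_sub_sq_sum_le (fun i => hI i (mem_univ i))
    (fun i => hJ i (mem_univ i))
  refine ⟨I, J, ?_⟩
  rw [show ⟪v I - v J, x⟫ = d I - d J by rw [hd, ← inner_sub_left, sub_sub_sub_cancel_right]]
  rw [Fintype.card_fin, Nat.cast_add_one, ← hvar, hx] at hspread
  have hsq : (2 : ℝ) ^ 2 ≤ ((d I - d J) * √(m + 1)) ^ 2 := by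
    rw [mul_pow, Real.sq_sqrt (by positivity)]
    nlinarith
  rw [div_le_iff₀ (by positivity)]
  exact (pow_le_pow_iff_left₀ zero_le_two
    (mul_nonneg (sub_nonneg.2 (hJ I (mem_univ I))) (Real.sqrt_nonneg _)) two_ne_zero).mp hsq

end Simplex

section Hyperplane

variable {E : Type*} [NormedAddCommGroup E] [InnerProductSpace ℝ E]

lemma Submodule.exists_norm_eq_one_mem_orthogonal {K : Submodule ℝ E} [K.HasOrthogonalProjection]
    (hK : K ≠ ⊤) : ∃ n ∈ Kᗮ, ‖n‖ = 1 := by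
  obtain ⟨x, hx, hx0⟩ := Submodule.exists_mem_ne_zero_of_ne_bot
    (mt Submodule.orthogonal_eq_bot_iff.mp hK)
  exact ⟨‖x‖⁻¹ • x, Kᗮ.smul_mem _ hx, norm_smul_inv_norm hx0⟩

lemma AffineSubspace.abs_inner_sub_le_infDist {H : AffineSubspace ℝ E} {n p : E}
    (hn : n ∈ H.directionᗮ) (hn1 : ‖n‖ = 1) (hp : p ∈ H) (y : E) :
    |⟪y - p, n⟫| ≤ Metric.infDist y H := by
  refine (Metric.le_infDist ⟨p, hp⟩).mpr fun a ha => ?_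
  have hap : ⟪a - p, n⟫ = 0 :=
    Submodule.inner_right_of_mem_orthogonal (H.vsub_mem_direction ha hp) hn
  calc |⟪y - p, n⟫| = |⟪y - a, n⟫| := by
        rw [← sub_add_sub_cancel y a p, inner_add_left, hap, add_zero]
    _ ≤ ‖y - a‖ * ‖n‖ := abs_real_inner_le_norm _ _
    _ = dist y a := by rw [hn1, mul_one, dist_eq_norm]

end Hyperplane

lemma exists_inv_sqrt_le_infDist_of_dist_eq_sqrt_two {E : Type*} [NormedAddCommGroup E]
    [InnerProductSpace ℝ E] [FiniteDimensional ℝ E] {m : ℕ} (hE : finrank ℝ E = m)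
    {v : Fin (m + 1) → E} (hv : ∀ i j, i ≠ j → dist (v i) (v j) = √2)
    {H : AffineSubspace ℝ E} (hH : (H : Set E).Nonempty) (hdir : H.direction ≠ ⊤) :
    ∃ i, 1 / √(m + 1) ≤ Metric.infDist (v i) H := by
  obtain ⟨p, hp⟩ := hH
  obtain ⟨n, hn, hn1⟩ := Submodule.exists_norm_eq_one_mem_orthogonal hdir
  obtain ⟨i, j, hij⟩ := exists_le_inner_sub_of_dist_eq_sqrt_two hE hv hn1
  have hdist := H.abs_inner_sub_le_infDist hn hn1 hp
  rw [← sub_sub_sub_cancel_right (v i) (v j) p, inner_sub_left] at hij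
  by_cases hi : 1 / √(m + 1) ≤ ⟪v i - p, n⟫
  · exact ⟨i, hi.trans ((le_abs_self _).trans (hdist (v i)))⟩
  · refine ⟨j, le_trans ?_ ((neg_le_abs _).trans (hdist (v j)))⟩
    linarith [show 2 / √(m + 1) = 1 / √(m + 1) + 1 / √(m + 1) by ring]

theorem stmt_7 (m : ℕ) (hm : 1 ≤ m)
    (v : Fin (m + 1) → EuclideanSpace ℝ (Fin m))
    (hv : ∀ i j, i ≠ j → dist (v i) (v j) = Real.sqrt 2)
    (H : AffineSubspace ℝ (EuclideanSpace ℝ (Fin m)))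
    (hHne : (H : Set (EuclideanSpace ℝ (Fin m))).Nonempty)
    (hHdim : Module.finrank ℝ H.direction = m - 1) :
    ∃ i, Real.sqrt (m + 1) / (m.factorial : ℝ) /
        (2 * (volume (Metric.closedBall (0 : EuclideanSpace ℝ (Fin (m - 1))) 1)).toReal)
      ≤ Metric.infDist (v i) (H : Set (EuclideanSpace ℝ (Fin m))) := by
  have hdir : H.direction ≠ ⊤ := fun htop => by
    rw [htop, finrank_top, finrank_euclideanSpace_fin] at hHdim
    omega
  obtain ⟨i, hi⟩ :=
    exists_inv_sqrt_le_infDist_of_dist_eq_sqrt_two finrank_euclideanSpace_fin hv hHne hdir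
  exact ⟨i, (sqrt_div_factorial_div_volume_closedBall_le hm).trans hi⟩
end

section
/- Let m ≥ 1 and p ∈ [1, ∞). There exist a continuous function f* : [0,1]^d → ℝ^m (for any d ≥ 1) and ε > 0 such that for every function of the form f = t ∘ g, where g : [0,1]^d → ℝ^{m−1} is any measurable function and t : ℝ^{m−1} → ℝ^m is any affine map, the L^p distance (∫_{[0,1]^d} ‖f*(x) − f(x)‖_p^p dx)^{1/p} exceeds ε. -/
/-!
Let `fstar x` run, as `(2m+1)·x₀` sweeps `[0, 2m+1]`, along the polygonal path through the vertices
`0, e₁, …, eₘ` of a simplex, resting at each vertex on a slab of the cube of volume `1/(2m+1)`.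
The image of an affine map `ℝ^(m-1) → ℝᵐ` lies in a hyperplane `a ⬝ᵥ y = c`. Since `a ⬝ᵥ` takes
the values `0, a₁, …, aₘ` at the vertices, one of them is at distance `≥ ‖a‖₁ / (2m)` from `c`,
hence at sup-distance `≥ 1/(2m)` from the hyperplane. On its slab the integrand is at least
`(2m)^(-p)`, so the `Lᵖ` distance is at least `((2m)^(-p) / (2m+1))^(1/p)`.
-/

open MeasureTheory

noncomputable section

def simplexVertex (m : ℕ) : Fin (m + 1) → Fin m → ℝ :=
  Fin.cons 0 fun j => Pi.single j 1

/-- Coordinate `i` is a trapezoid rising on `[2i+1, 2i+2]` and falling on `[2i+3, 2i+4]`, so the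
path rests at `simplexVertex m k` for `s ∈ [2k, 2k+1]` and moves linearly in between. -/
def simplexPath (m : ℕ) (s : ℝ) : Fin m → ℝ := fun i =>
  max 0 (min 1 (min (s - (2 * i + 1)) (2 * i + 4 - s)))

end

theorem exists_dotProduct_eq_of_finrank_lt {K V : Type*} [Field K] [AddCommGroup V] [Module K V]
    [FiniteDimensional K V] {m : ℕ} (t : V →ᵃ[K] (Fin m → K)) (h : Module.finrank K V < m) :
    ∃ a ≠ 0, ∀ y, a ⬝ᵥ t y = a ⬝ᵥ t 0 := by
  have hrange : LinearMap.range t.linear < ⊤ := by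
    refine lt_top_iff_ne_top.2 fun htop => h.not_ge ?_
    calc m = Module.finrank K (LinearMap.range t.linear) := by rw [htop, finrank_top]; simp
      _ ≤ Module.finrank K V := LinearMap.finrank_range_le _
  obtain ⟨f, hf, hker⟩ := (LinearMap.range t.linear).exists_le_ker_of_lt_top hrange
  set a := (dotProductEquiv K (Fin m)).symm f
  have hfa : ∀ w, a ⬝ᵥ w = f w := fun w => by
    conv_rhs => rw [← (dotProductEquiv K (Fin m)).apply_symm_apply f]
    rfl
  refine ⟨a, by simpa [a] using hf, fun y => ?_⟩
  have hy : t y = t.linear y + t 0 := by simpa using t.map_vadd 0 y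
  rw [hfa, hfa, hy, map_add, hker (LinearMap.mem_range_self _ y), zero_add]

theorem continuous_simplexPath (m : ℕ) : Continuous (simplexPath m) :=
  continuous_pi fun i => by unfold simplexPath; fun_prop

theorem simplexPath_eq_simplexVertex {m : ℕ} (k : Fin (m + 1)) {s : ℝ}
    (hs : s ∈ Set.Icc (2 * (k : ℝ)) (2 * k + 1)) : simplexPath m s = simplexVertex m k := by
  obtain ⟨hs₁, hs₂⟩ := hs
  funext i
  have hi : (0 : ℝ) ≤ i := Nat.cast_nonneg _
  simp only [simplexPath]
  induction k using Fin.cases with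
  | zero =>
    simp only [Fin.val_zero, Nat.cast_zero, simplexVertex, Fin.cons_zero, Pi.zero_apply] at hs₂ ⊢
    exact max_eq_left (min_le_of_right_le (min_le_of_left_le (by linarith)))
  | succ j =>
    simp only [Fin.val_succ, Nat.cast_add, Nat.cast_one, simplexVertex, Fin.cons_succ] at hs₁ hs₂ ⊢
    rcases lt_trichotomy i j with hij | rfl | hij
    · have : (i : ℝ) + 1 ≤ j := by exact_mod_cast hij
      rw [Pi.single_eq_of_ne hij.ne]
      exact max_eq_left (min_le_of_right_le (min_le_of_right_le (by linarith)))
    · rw [Pi.single_eq_same, min_eq_left (le_min (by linarith) (by linarith)), max_eq_right zero_le_one]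
    · have : (j : ℝ) + 1 ≤ i := by exact_mod_cast hij
      rw [Pi.single_eq_of_ne hij.ne']
      exact max_eq_left (min_le_of_right_le (min_le_of_left_le (by linarith)))

theorem exists_simplexVertex_far {m : ℕ} (a : Fin m → ℝ) (c : ℝ) :
    ∃ k, (∑ i, |a i|) * (2 * (m : ℝ))⁻¹ ≤ |a ⬝ᵥ simplexVertex m k - c| := by
  rcases Nat.eq_zero_or_pos m with rfl | hm
  · exact ⟨0, by simp⟩
  have : Nonempty (Fin m) := Fin.pos_iff_nonempty.1 hm
  by_contra! hfar
  have hc : |c| < (∑ i, |a i|) * (2 * (m : ℝ))⁻¹ := by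
    simpa [simplexVertex] using hfar 0
  have hcoord : ∀ j, |a j| < (∑ i, |a i|) * (m : ℝ)⁻¹ := fun j => by
    have hj := hfar j.succ
    simp only [simplexVertex, Fin.cons_succ, dotProduct_single_one] at hj
    calc |a j| ≤ |a j - c| + |c| := by simpa using abs_add_le (a j - c) c
      _ < (∑ i, |a i|) * (2 * (m : ℝ))⁻¹ + (∑ i, |a i|) * (2 * (m : ℝ))⁻¹ := add_lt_add hj hc
      _ = (∑ i, |a i|) * (m : ℝ)⁻¹ := by ring
  have hsum := Finset.sum_lt_sum_of_nonempty Finset.univ_nonempty fun j _ => hcoord j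
  rw [Finset.sum_const, Finset.card_univ, Fintype.card_fin, nsmul_eq_mul,
    mul_comm, mul_assoc, inv_mul_cancel₀ (by positivity), mul_one] at hsum
  exact hsum.false

theorem abs_dotProduct_le {ι : Type*} [Fintype ι] (a w : ι → ℝ) :
    |a ⬝ᵥ w| ≤ (∑ i, |a i|) * ‖w‖ := by
  rw [Finset.sum_mul]
  refine (Finset.abs_sum_le_sum_abs _ _).trans (Finset.sum_le_sum fun i _ => ?_)
  rw [abs_mul]
  exact mul_le_mul_of_nonneg_left (norm_le_pi_norm w i) (abs_nonneg _)

theorem norm_rpow_le_sum_abs_rpow {ι : Type*} [Fintype ι] (w : ι → ℝ) {p : ℝ} (hp : 0 < p) :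
    ‖w‖ ^ p ≤ ∑ i, |w i| ^ p := by
  have hS : 0 ≤ ∑ i, |w i| ^ p := by positivity
  have hnorm : ‖w‖ ≤ (∑ i, |w i| ^ p) ^ p⁻¹ := by
    refine (pi_norm_le_iff_of_nonneg (by positivity)).2 fun i => ?_
    rw [Real.norm_eq_abs, ← Real.rpow_rpow_inv (abs_nonneg (w i)) hp.ne']
    gcongr
    exact Finset.single_le_sum (f := fun i => |w i| ^ p) (fun i _ => by positivity)
      (Finset.mem_univ i)
  calc ‖w‖ ^ p ≤ ((∑ i, |w i| ^ p) ^ p⁻¹) ^ p := by gcongr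
    _ = ∑ i, |w i| ^ p := Real.rpow_inv_rpow hS hp.ne'

theorem rpow_le_sum_abs_sub_rpow_of_le_abs_dotProduct_sub {ι : Type*} [Fintype ι]
    {a v y : ι → ℝ} (ha : a ≠ 0) {δ p : ℝ} (hδ : 0 ≤ δ) (hp : 0 < p)
    (h : (∑ i, |a i|) * δ ≤ |a ⬝ᵥ v - a ⬝ᵥ y|) : δ ^ p ≤ ∑ i, |v i - y i| ^ p := by
  have hA : 0 < ∑ i, |a i| := by
    obtain ⟨i, hi⟩ := Function.ne_iff.1 ha
    exact Finset.sum_pos' (fun i _ => abs_nonneg _) ⟨i, Finset.mem_univ i, abs_pos.2 hi⟩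
  have hδv : δ ≤ ‖v - y‖ := by
    refine le_of_mul_le_mul_left ?_ hA
    rw [← dotProduct_sub] at h
    exact h.trans (abs_dotProduct_le a (v - y))
  calc δ ^ p ≤ ‖v - y‖ ^ p := by gcongr
    _ ≤ ∑ i, |v i - y i| ^ p := norm_rpow_le_sum_abs_rpow (v - y) hp

theorem volume_pi_update_Icc {ι : Type*} [Fintype ι] [DecidableEq ι] (i : ι) (a b : ℝ) :
    volume (Set.univ.pi (Function.update (fun _ => Set.Icc (0 : ℝ) 1) i (Set.Icc a b))) =
      ENNReal.ofReal (b - a) := by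
  rw [volume_pi_pi, ← Finset.mul_prod_erase _ _ (Finset.mem_univ i), Function.update_self,
    Real.volume_Icc, Finset.prod_eq_one, mul_one]
  intro j hj
  rw [Function.update_of_ne (Finset.ne_of_mem_erase hj), Real.volume_Icc]
  simp

theorem mul_measure_le_setLIntegral {α : Type*} [MeasurableSpace α] {μ : Measure α}
    {s t : Set α} {f : α → ENNReal} {c : ENNReal} (hs : MeasurableSet s) (hst : s ⊆ t)
    (hf : ∀ x ∈ s, c ≤ f x) : c * μ s ≤ ∫⁻ x in t, f x ∂μ :=
  calc c * μ s = ∫⁻ _ in s, c ∂μ := (setLIntegral_const s c).symm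
    _ ≤ ∫⁻ x in s, f x ∂μ := setLIntegral_mono' hs hf
    _ ≤ ∫⁻ x in t, f x ∂μ := lintegral_mono_set hst

theorem ofReal_mul_sub_le_setLIntegral_Icc {ι : Type*} [Fintype ι] [DecidableEq ι] (i : ι)
    {a b c : ℝ} {f : (ι → ℝ) → ENNReal} (ha : 0 ≤ a) (hb : b ≤ 1)
    (hf : ∀ x : ι → ℝ, x i ∈ Set.Icc a b → ENNReal.ofReal c ≤ f x) :
    ENNReal.ofReal c * ENNReal.ofReal (b - a) ≤ ∫⁻ x in Set.Icc 0 1, f x := by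
  set S := Set.univ.pi (Function.update (fun _ => Set.Icc (0 : ℝ) 1) i (Set.Icc a b))
  have hS : MeasurableSet S := MeasurableSet.univ_pi fun j => by
    rcases eq_or_ne j i with rfl | hj <;> simp [*]
  have hSsub : S ⊆ Set.Icc 0 1 := by
    rw [← Set.pi_univ_Icc]
    refine Set.pi_mono fun j _ => ?_
    simp only [Pi.zero_apply, Pi.one_apply]
    rcases eq_or_ne j i with rfl | hj
    · rw [Function.update_self]
      exact Set.Icc_subset_Icc ha hb
    · rw [Function.update_of_ne hj]
  rw [← volume_pi_update_Icc i a b]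
  refine mul_measure_le_setLIntegral hS hSsub fun x hx => hf x ?_
  simpa using hx i (Set.mem_univ i)

theorem stmt_9 (m d : ℕ) (hm : 1 ≤ m) (hd : 1 ≤ d) (p : ℝ) (hp : 1 ≤ p) :
    ∃ (fstar : (Fin d → ℝ) → (Fin m → ℝ)) (ε : ℝ),
      Continuous fstar ∧ 0 < ε ∧
      ∀ (g : (Fin d → ℝ) → (Fin (m - 1) → ℝ)), Measurable g →
        ∀ t : (Fin (m - 1) → ℝ) →ᵃ[ℝ] (Fin m → ℝ),
          ENNReal.ofReal ε <
            (∫⁻ x in Set.Icc (0 : Fin d → ℝ) 1,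
              ENNReal.ofReal (∑ i, |fstar x i - t (g x) i| ^ p)) ^ (1 / p) := by
  have : NeZero d := ⟨by omega⟩
  set n : ℝ := 2 * m + 1
  set δ : ℝ := (2 * (m : ℝ))⁻¹
  set E := (δ ^ p * (1 / n)) ^ (1 / p)
  refine ⟨fun x => simplexPath m (n * x 0), E / 2, (continuous_simplexPath m).comp (by fun_prop),
    by positivity, fun g _ t => ?_⟩
  obtain ⟨a, ha, hplane⟩ := exists_dotProduct_eq_of_finrank_lt t (by simp; omega)
  obtain ⟨k, hk⟩ := exists_simplexVertex_far a (a ⬝ᵥ t 0)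
  have hkm : (k : ℝ) ≤ m := by exact_mod_cast Fin.is_le k
  have hpoint : ∀ x : Fin d → ℝ, x 0 ∈ Set.Icc (2 * k / n) ((2 * k + 1) / n) →
      ENNReal.ofReal (δ ^ p) ≤
        ENNReal.ofReal (∑ i, |simplexPath m (n * x 0) i - t (g x) i| ^ p) := by
    intro x hx
    have hx0 : n * x 0 ∈ Set.Icc (2 * (k : ℝ)) (2 * k + 1) := by
      rwa [Set.mem_Icc, div_le_iff₀' (by positivity), le_div_iff₀' (by positivity)] at hx
    rw [simplexPath_eq_simplexVertex k hx0]
    exact ENNReal.ofReal_le_ofReal (rpow_le_sum_abs_sub_rpow_of_le_abs_dotProduct_sub ha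
      (by positivity) (by linarith) (by rwa [hplane]))
  have hint := ofReal_mul_sub_le_setLIntegral_Icc 0 (by positivity)
    ((div_le_one (by positivity)).2 (by linarith)) hpoint
  rw [← ENNReal.ofReal_mul (by positivity), show (2 * k + 1) / n - 2 * k / n = 1 / n by ring]
    at hint
  calc ENNReal.ofReal (E / 2) < ENNReal.ofReal E :=
        (ENNReal.ofReal_lt_ofReal_iff (by positivity)).2 (by linarith [show 0 < E by positivity])
    _ = ENNReal.ofReal (δ ^ p * (1 / n)) ^ (1 / p) :=
        (ENNReal.ofReal_rpow_of_nonneg (by positivity) (by positivity)).symm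
    _ ≤ _ := ENNReal.rpow_le_rpow hint (by positivity)
end

section
/- Let f : ℝ → ℝ be a continuous piecewise linear function on a compact interval I with finitely many linear pieces. Then there exists a ReLU network of width 2 (a composition of affine maps ℝ→ℝ², ℝ²→ℝ² interleaved with coordinatewise ReLU, ending with an affine map ℝ²→ℝ) that agrees with f on all of I. -/
/-- Coordinatewise ReLU on ℝ². -/
def relu2 (v : Fin 2 → ℝ) : Fin 2 → ℝ := fun i => max (v i) 0

/-- Composition of `L` hidden layers of the form `σ ∘ t_ℓ` on ℝ². -/
def hiddenComp : (L : ℕ) → (ℕ → (Fin 2 → ℝ) →ᵃ[ℝ] (Fin 2 → ℝ)) → (Fin 2 → ℝ) → (Fin 2 → ℝ)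
  | 0, _ => id
  | L + 1, ts => (fun v => relu2 (ts L v)) ∘ hiddenComp L ts

/-- `f : ℝ → ℝ` is a ReLU network of width 2: `f = t_L ∘ σ ∘ t_{L-1} ∘ ⋯ ∘ σ ∘ t₁`. -/
def IsReLUNet2 (f : ℝ → ℝ) : Prop :=
  ∃ (L : ℕ) (t1 : ℝ →ᵃ[ℝ] (Fin 2 → ℝ)) (ts : ℕ → (Fin 2 → ℝ) →ᵃ[ℝ] (Fin 2 → ℝ))
    (tL : (Fin 2 → ℝ) →ᵃ[ℝ] ℝ),
    f = fun x => tL (hiddenComp L ts (relu2 (t1 x)))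

namespace S10

noncomputable def affIn (p q r u : ℝ) : ℝ →ᵃ[ℝ] (Fin 2 → ℝ) where
  toFun x := ![p * x + q, r * x + u]
  linear :=
    { toFun := fun x => ![p * x, r * x]
      map_add' := by intro x y; funext i; fin_cases i <;> simp [mul_add]
      map_smul' := by intro c x; funext i; fin_cases i <;> simp <;> ring }
  map_vadd' := by intro x v; funext i; fin_cases i <;> simp <;> ring

noncomputable def aff2 (α β γ δ ε ζ : ℝ) : (Fin 2 → ℝ) →ᵃ[ℝ] (Fin 2 → ℝ) where
  toFun v := ![α * v 0 + β * v 1 + γ, δ * v 0 + ε * v 1 + ζ]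
  linear :=
    { toFun := fun v => ![α * v 0 + β * v 1, δ * v 0 + ε * v 1]
      map_add' := by intro x y; funext i; fin_cases i <;> simp <;> ring
      map_smul' := by intro c x; funext i; fin_cases i <;> simp <;> ring }
  map_vadd' := by intro x v; funext i; fin_cases i <;> simp <;> ring

noncomputable def affOut (α β γ : ℝ) : (Fin 2 → ℝ) →ᵃ[ℝ] ℝ where
  toFun v := α * v 0 + β * v 1 + γ
  linear :=
    { toFun := fun v => α * v 0 + β * v 1
      map_add' := by intro x y; simp; ring
      map_smul' := by intro c x; simp; ring }
  map_vadd' := by intro x v; simp; ring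

@[simp] lemma affIn_apply (p q r u x : ℝ) : affIn p q r u x = ![p * x + q, r * x + u] := rfl
@[simp] lemma aff2_apply (α β γ δ ε ζ : ℝ) (v : Fin 2 → ℝ) :
    aff2 α β γ δ ε ζ v = ![α * v 0 + β * v 1 + γ, δ * v 0 + ε * v 1 + ζ] := rfl
@[simp] lemma affOut_apply (α β γ : ℝ) (v : Fin 2 → ℝ) :
    affOut α β γ v = α * v 0 + β * v 1 + γ := rfl

@[simp] lemma relu2_pair (p q : ℝ) : relu2 ![p, q] = ![max p 0, max q 0] := by
  funext i; fin_cases i <;> rfl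

lemma max_sub (p e : ℝ) (he : 0 ≤ e) : max (max p 0 - e) 0 = max (p - e) 0 := by
  rcases le_total p 0 with h | h
  · rw [max_eq_right h, max_eq_right (by linarith : (0:ℝ) - e ≤ 0),
      max_eq_right (by linarith : p - e ≤ 0)]
  · rw [max_eq_left h]

/-- The partial piecewise-linear sums. -/
noncomputable def Gfun (S T Z : ℕ → ℝ) : ℕ → ℝ → ℝ
  | 0, x => S 0 * x + T 0
  | j + 1, x => Gfun S T Z j x + (S (j + 1) - S j) * max (x - Z (j + 1)) 0

/-- The hidden layers. -/
noncomputable def tsfun (S Z : ℕ → ℝ) : ℕ → (Fin 2 → ℝ) →ᵃ[ℝ] (Fin 2 → ℝ) := fun ℓ =>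
  if ℓ % 2 = 0 then aff2 1 0 (Z (ℓ / 2) - Z (ℓ / 2 + 1)) 0 1 0
  else aff2 1 0 0 (S (ℓ / 2 + 1) - S (ℓ / 2)) 1 0

lemma tsfun_even (S Z : ℕ → ℝ) (j : ℕ) :
    tsfun S Z (2 * j) = aff2 1 0 (Z j - Z (j + 1)) 0 1 0 := by
  simp [tsfun, Nat.mul_mod_right, Nat.mul_div_cancel_left _ (by norm_num : 0 < 2)]

lemma tsfun_odd (S Z : ℕ → ℝ) (j : ℕ) :
    tsfun S Z (2 * j + 1) = aff2 1 0 0 (S (j + 1) - S j) 1 0 := by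
  have h1 : (2 * j + 1) % 2 = 1 := by omega
  have h2 : (2 * j + 1) / 2 = j := by omega
  simp [tsfun, h1, h2]

theorem key (n : ℕ) (Z S T : ℕ → ℝ) (f : ℝ → ℝ)
    (hZmono : Monotone Z)
    (hST : ∀ j, j ≤ n → ∀ x, Z j ≤ x → x ≤ Z (j + 1) → f x = S j * x + T j) :
    ∃ g : ℝ → ℝ, IsReLUNet2 g ∧ ∀ x ∈ Set.Icc (Z 0) (Z (n + 1)), g x = f x := by
  classical
  set a := Z 0 with ha
  set b := Z (n + 1) with hb
  have hab : a ≤ b := hZmono (Nat.zero_le _)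
  -- matching at breakpoints
  have hT : ∀ j, j < n → T (j + 1) = T j + (S j - S (j + 1)) * Z (j + 1) := by
    intro j hj
    have h1 := hST j (le_of_lt hj) (Z (j + 1)) (hZmono (Nat.le_succ j)) le_rfl
    have h2 := hST (j + 1) hj (Z (j + 1)) le_rfl (hZmono (Nat.le_succ _))
    rw [h1] at h2; linarith [h2]
  set G := Gfun S T Z with hG
  -- Fact 1: on x ≥ Z j the partial sum is the j-th affine piece  (j ≤ n)
  have fact1 : ∀ j, j ≤ n → ∀ x, Z j ≤ x → G j x = S j * x + T j := by
    intro j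
    induction j with
    | zero => intro _ x _; simp [hG, Gfun]
    | succ j ih =>
      intro hj x hx
      have hZ' : Z j ≤ x := le_trans (hZmono (Nat.le_succ j)) hx
      have h1 := ih (by omega) x hZ'
      have hmax : max (x - Z (j + 1)) 0 = x - Z (j + 1) :=
        max_eq_left (by linarith)
      have hTj := hT j (by omega)
      simp only [hG, Gfun] at h1 ⊢
      rw [h1, hmax, hTj]; ring
  -- Fact 2: later terms vanish below Z (j+1)
  have fact2 : ∀ j k, j ≤ k → ∀ x, x ≤ Z (j + 1) → G k x = G j x := by
    intro j k hjk
    induction k with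
    | zero => intro x _; have : j = 0 := Nat.le_zero.mp hjk; rw [this]
    | succ k ih =>
      intro x hx
      rcases Nat.lt_or_ge j (k + 1) with h | h
      · have hj' : j ≤ k := by omega
        have hZZ : Z (j + 1) ≤ Z (k + 1) := hZmono (by omega)
        have hmax : max (x - Z (k + 1)) 0 = 0 := max_eq_right (by linarith)
        simp only [hG, Gfun] at ih ⊢
        rw [hmax, ih hj' x hx]; ring
      · have : j = k + 1 := by omega
        rw [this]
  -- Bound
  set B0 : ℝ := |S 0| * (|a| + |b|) + |T 0| with hB0
  have hbd : ∀ j, ∀ x ∈ Set.Icc a b,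
      |G j x| ≤ B0 + ∑ k ∈ Finset.range j, |S (k + 1) - S k| * (b - a) := by
    intro j
    induction j with
    | zero =>
      intro x hx
      have h1 : |x| ≤ |a| + |b| := by
        rw [abs_le]
        constructor
        · have := neg_abs_le a; have := abs_nonneg b; linarith [hx.1]
        · have := le_abs_self b; have := abs_nonneg a; linarith [hx.2]
      have h0 : |S 0 * x + T 0| ≤ |S 0| * |x| + |T 0| := by
        calc |S 0 * x + T 0| ≤ |S 0 * x| + |T 0| := abs_add_le _ _
        _ = |S 0| * |x| + |T 0| := by rw [abs_mul]
      simp only [hG, Gfun, Finset.range_zero, Finset.sum_empty, add_zero, hB0]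
      have h2 : |S 0| * |x| ≤ |S 0| * (|a| + |b|) :=
        mul_le_mul_of_nonneg_left h1 (abs_nonneg _)
      linarith
    | succ j ih =>
      intro x hx
      have hm1 : (0:ℝ) ≤ max (x - Z (j + 1)) 0 := le_max_right _ _
      have hm2 : max (x - Z (j + 1)) 0 ≤ b - a := by
        have hZa : a ≤ Z (j + 1) := hZmono (Nat.zero_le _)
        have hxb : x - Z (j + 1) ≤ b - a := by have := hx.2; linarith
        exact max_le hxb (by linarith)
      have h3 : |(S (j + 1) - S j) * max (x - Z (j + 1)) 0| ≤ |S (j + 1) - S j| * (b - a) := by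
        rw [abs_mul, abs_of_nonneg hm1]
        exact mul_le_mul_of_nonneg_left hm2 (abs_nonneg _)
      have h4 := ih x hx
      simp only [hG, Gfun] at h4 ⊢
      rw [Finset.sum_range_succ]
      calc |Gfun S T Z j x + (S (j + 1) - S j) * max (x - Z (j + 1)) 0|
          ≤ |Gfun S T Z j x| + |(S (j + 1) - S j) * max (x - Z (j + 1)) 0| := abs_add_le _ _
        _ ≤ _ := by linarith
  set M : ℝ := B0 + ∑ k ∈ Finset.range n, |S (k + 1) - S k| * (b - a) with hM
  have hMnn : ∀ j, j ≤ n → ∀ x ∈ Set.Icc a b, 0 ≤ M + G j x := by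
    intro j hj x hx
    have h1 := hbd j x hx
    have h2 : ∑ k ∈ Finset.range j, |S (k + 1) - S k| * (b - a)
        ≤ ∑ k ∈ Finset.range n, |S (k + 1) - S k| * (b - a) := by
      apply Finset.sum_le_sum_of_subset_of_nonneg (Finset.range_subset_range.mpr hj)
      intro k _ _
      exact mul_nonneg (abs_nonneg _) (by linarith)
    have := neg_abs_le (G j x)
    rw [hM]; linarith
  -- the network
  set ts := tsfun S Z with hts
  set t1 := affIn 1 (-a) (S 0) (T 0 + M) with ht1
  refine ⟨fun x => affOut 0 1 (-M) (hiddenComp (2 * n) ts (relu2 (t1 x))),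
    ⟨2 * n, t1, ts, affOut 0 1 (-M), rfl⟩, ?_⟩
  have inv : ∀ j, j ≤ n → ∀ x ∈ Set.Icc a b,
      hiddenComp (2 * j) ts (relu2 (t1 x)) = ![max (x - Z j) 0, M + G j x] := by
    intro j
    induction j with
    | zero =>
      intro _ x hx
      have h0 := hMnn 0 (Nat.zero_le _) x hx
      simp only [hG, Gfun] at h0
      show relu2 (t1 x) = _
      rw [ht1, affIn_apply, relu2_pair]
      funext i; fin_cases i
      · simp [ha, sub_eq_add_neg]
      · simp only [hG, Gfun]
        simp [max_eq_left (by linarith : (0:ℝ) ≤ S 0 * x + (T 0 + M))]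
        ring
    | succ j ih =>
      intro hj x hx
      have hj' : j ≤ n := by omega
      have e2 : 2 * (j + 1) = (2 * j + 1) + 1 := by ring
      have s1 : relu2 (ts (2 * j) ![max (x - Z j) 0, M + G j x])
          = ![max (x - Z (j + 1)) 0, M + G j x] := by
        rw [hts, tsfun_even, aff2_apply]
        simp only [Matrix.cons_val_zero, Matrix.cons_val_one, Matrix.head_cons, one_mul,
          zero_mul, add_zero, zero_add, mul_zero]
        rw [relu2_pair]
        have hc : max (max (x - Z j) 0 + (Z j - Z (j + 1))) 0 = max (x - Z (j + 1)) 0 := by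
          have hstep1 : max (x - Z j) 0 + (Z j - Z (j + 1))
              = max (x - Z j) 0 - (Z (j + 1) - Z j) := by ring
          rw [hstep1, max_sub _ _ (by have := hZmono (Nat.le_succ j); linarith)]
          have hstep2 : x - Z j - (Z (j + 1) - Z j) = x - Z (j + 1) := by ring
          rw [hstep2]
        rw [hc, max_eq_left (hMnn j hj' x hx)]
      have s2 : relu2 (ts (2 * j + 1) ![max (x - Z (j + 1)) 0, M + G j x])
          = ![max (x - Z (j + 1)) 0, M + G (j + 1) x] := by
        rw [hts, tsfun_odd, aff2_apply]
        simp only [Matrix.cons_val_zero, Matrix.cons_val_one, Matrix.head_cons, one_mul,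
          zero_mul, add_zero, zero_add, mul_zero]
        rw [relu2_pair]
        have hv : (S (j + 1) - S j) * max (x - Z (j + 1)) 0 + (M + G j x)
            = M + G (j + 1) x := by
          simp only [hG, Gfun]; ring
        rw [max_eq_left (le_max_right _ _), hv, max_eq_left (hMnn (j + 1) hj x hx)]
      rw [e2]
      show relu2 (ts (2 * j + 1) (relu2 (ts (2 * j) (hiddenComp (2 * j) ts (relu2 (t1 x)))))) = _
      rw [ih hj' x hx, s1, s2]
  -- conclude
  intro x hx
  show affOut 0 1 (-M) (hiddenComp (2 * n) ts (relu2 (t1 x))) = f x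
  rw [inv n le_rfl x hx, affOut_apply]
  simp only [Matrix.cons_val_zero, Matrix.cons_val_one, Matrix.head_cons, one_mul, zero_mul,
    zero_add]
  -- find the piece containing x
  have hkey : ∃ j, j ≤ n ∧ Z j ≤ x ∧ x ≤ Z (j + 1) := by
    refine ⟨Nat.findGreatest (fun i => Z i ≤ x) n, Nat.findGreatest_le n,
      Nat.findGreatest_spec (P := fun i => Z i ≤ x) (Nat.zero_le n) hx.1, ?_⟩
    rcases Nat.lt_or_ge (Nat.findGreatest (fun i => Z i ≤ x) n) n with h | h
    · by_contra hcon
      push_neg at hcon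
      exact absurd (le_of_lt hcon)
        (Nat.findGreatest_is_greatest (P := fun i => Z i ≤ x) (Nat.lt_succ_self _) (by omega))
    · have hje : Nat.findGreatest (fun i => Z i ≤ x) n = n :=
        le_antisymm (Nat.findGreatest_le n) h
      rw [hje]; exact hx.2
  obtain ⟨j, hjn, hZjx, hxZj⟩ := hkey
  rw [fact2 j n hjn x hxZj, fact1 j hjn x hZjx, ← hST j hjn x hZjx hxZj]
  ring

end S10

theorem stmt_10 (a b : ℝ) (hab : a ≤ b) (f : ℝ → ℝ)
    (hf : ContinuousOn f (Set.Icc a b))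
    (hpl : ∃ (N : ℕ) (z : Fin (N + 1) → ℝ), Monotone z ∧ z 0 = a ∧ z (Fin.last N) = b ∧
      ∀ k : Fin N, ∃ s t : ℝ, ∀ x ∈ Set.Icc (z k.castSucc) (z k.succ), f x = s * x + t) :
    ∃ g : ℝ → ℝ, IsReLUNet2 g ∧ ∀ x ∈ Set.Icc a b, g x = f x := by
  obtain ⟨N, z, hz, hz0, hzN, hpl⟩ := hpl
  choose s t hst using hpl
  cases N with
  | zero =>
    have hba : b = a := by rw [← hz0, ← hzN]; congr 1
    refine ⟨fun _ => f a,
      ⟨0, S10.affIn 0 0 0 0, fun _ => S10.aff2 0 0 0 0 0 0, S10.affOut 0 0 (f a), ?_⟩, ?_⟩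
    · funext x
      show f a = S10.affOut 0 0 (f a) (hiddenComp 0 _ (relu2 (S10.affIn 0 0 0 0 x)))
      simp [hiddenComp]
    · intro x hx
      have hxa : x = a := le_antisymm (hba ▸ hx.2) hx.1
      rw [hxa]
  | succ n =>
    set Z : ℕ → ℝ := fun j => z ⟨min j (n + 1), by omega⟩ with hZ
    set S : ℕ → ℝ := fun j => s ⟨min j n, by omega⟩ with hS
    set T : ℕ → ℝ := fun j => t ⟨min j n, by omega⟩ with hT
    have hZmono : Monotone Z := by
      intro i j hij
      apply hz
      simp only [Fin.mk_le_mk]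
      exact min_le_min hij le_rfl
    have hST : ∀ j, j ≤ n → ∀ x, Z j ≤ x → x ≤ Z (j + 1) → f x = S j * x + T j := by
      intro j hj x h1 h2
      have e1 : Z j = z ((⟨j, by omega⟩ : Fin (n + 1)).castSucc) := by
        simp only [hZ]; congr 1; exact Fin.ext (by simp only [Fin.coe_castSucc, Fin.val_succ]; omega)
      have e2 : Z (j + 1) = z ((⟨j, by omega⟩ : Fin (n + 1)).succ) := by
        simp only [hZ]; congr 1; exact Fin.ext (by simp only [Fin.coe_castSucc, Fin.val_succ]; omega)
      have hfx := hst ⟨j, by omega⟩ x ⟨e1 ▸ h1, e2 ▸ h2⟩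
      rw [hfx]
      have e3 : (⟨min j n, by omega⟩ : Fin (n + 1)) = ⟨j, by omega⟩ :=
        Fin.ext (by simp only [Fin.coe_castSucc, Fin.val_succ]; omega)
      simp only [hS, hT, e3]
    have hZ0 : Z 0 = a := by
      rw [← hz0]; simp only [hZ]; congr 1
    have hZn : Z (n + 1) = b := by
      rw [← hzN]; simp only [hZ]; congr 1; exact Fin.ext (by simp [Fin.last])
    obtain ⟨g, hg1, hg2⟩ := S10.key n Z S T f hZmono hST
    refine ⟨g, hg1, ?_⟩
    rw [← hZ0, ← hZn]
    exact hg2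
end

section
/- Let f* : ℝ → ℝ be any function, X ⊂ ℝ a finite set, and I ⊂ ℝ a compact interval containing X. Then there exists a ReLU network f : ℝ → ℝ of width 2 such that f(x) = f*(x) for all x ∈ X and f(I) ⊆ [min_{x∈X} f*(x), max_{x∈X} f*(x)]. -/
/-!
Sort the data points `x₀ < ⋯ < x_{n-1}`. The piecewise linear interpolant that is constant
outside `[x₀, x_{n-1}]` equals `y₀ + ∑ kᵢ (t - xᵢ)⁺`, where `kᵢ` is the change of slope at `xᵢ`;
between consecutive nodes it is a convex combination of two data values, which gives the range
bound. Such a sum is computed by a width-2 network: the first neuron turns `(t - xⱼ)⁺` into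
`(t - x_{j+1})⁺` (possible because the nodes increase), the second accumulates the partial sums,
shifted by a constant large enough that its ReLU never clips on `(-∞, b]`.
-/

lemma Finset.exists_monotone_strictMonoOn_image_eq {α : Type*} [LinearOrder α] (s : Finset α)
    (hs : s.Nonempty) :
    ∃ x : ℕ → α, Monotone x ∧ StrictMonoOn x (Set.Iio s.card) ∧ x '' Set.Iio s.card = s := by
  have hclamp (i : ℕ) : min i (s.card - 1) < s.card := by have := hs.card_pos; omega
  let e := s.orderEmbOfFin rfl
  refine ⟨fun i => e ⟨min i (s.card - 1), hclamp i⟩, fun i j hij => ?_, fun i hi j hj hij => ?_, ?_⟩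
  · exact e.monotone (Fin.mk_le_mk.2 (by omega))
  · exact e.strictMono (Fin.mk_lt_mk.2 (by rw [Set.mem_Iio] at hi hj; omega))
  · ext a
    constructor
    · rintro ⟨i, -, rfl⟩
      exact s.orderEmbOfFin_mem rfl _
    · intro ha
      obtain ⟨⟨i, hi⟩, rfl⟩ : a ∈ Set.range e := by rwa [s.range_orderEmbOfFin]
      exact ⟨i, hi, by simp only [e]; congr; omega⟩

lemma max_max_sub_zero_add_sub_zero {t c d : ℝ} (h : c ≤ d) :
    max (max (t - c) 0 + (c - d)) 0 = max (t - d) 0 := by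
  simp only [max_def]
  split_ifs <;> linarith

def reluSum (k x : ℕ → ℝ) (r : ℕ) (t : ℝ) : ℝ :=
  ∑ i ∈ Finset.range r, k i * max (t - x i) 0

lemma reluSum_succ (k x : ℕ → ℝ) (r : ℕ) (t : ℝ) :
    reluSum k x (r + 1) t = reluSum k x r t + k r * max (t - x r) 0 :=
  Finset.sum_range_succ _ _

section Network

variable (k x : ℕ → ℝ)

lemma relu2_vec2 (p q : ℝ) : relu2 ![p, q] = ![max p 0, max q 0] := by
  ext i; fin_cases i <;> rfl

noncomputable def reluSumLayer (j : ℕ) : (Fin 2 → ℝ) →ᵃ[ℝ] (Fin 2 → ℝ) :=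
  (Matrix.toLin' !![1, 0; k j, 1]).toAffineMap + AffineMap.const ℝ _ ![x j - x (j + 1), 0]

lemma reluSumLayer_apply (j : ℕ) (u v : ℝ) :
    reluSumLayer k x j ![u, v] = ![u + (x j - x (j + 1)), k j * u + v] := by
  ext i; fin_cases i <;> simp [reluSumLayer, mul_comm]

lemma abs_reluSum_le {r j : ℕ} (hj : j ≤ r) {t B : ℝ} (ht : t ≤ B) :
    |reluSum k x j t| ≤ ∑ i ∈ Finset.range r, |k i| * max (B - x i) 0 :=
  calc |reluSum k x j t| ≤ ∑ i ∈ Finset.range j, |k i * max (t - x i) 0| :=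
        Finset.abs_sum_le_sum_abs _ _
    _ ≤ ∑ i ∈ Finset.range j, |k i| * max (B - x i) 0 := by
        gcongr with i
        rw [abs_mul, abs_of_nonneg (le_max_right _ (0 : ℝ))]
        gcongr
    _ ≤ ∑ i ∈ Finset.range r, |k i| * max (B - x i) 0 :=
        Finset.sum_le_sum_of_subset_of_nonneg (Finset.range_subset_range.2 hj)
          fun _ _ _ => by positivity

variable {x}

lemma hiddenComp_reluSumLayer (hx : Monotone x) {M t : ℝ} :
    ∀ j, (∀ i ≤ j, 0 ≤ M + reluSum k x i t) →
      hiddenComp j (reluSumLayer k x) ![max (t - x 0) 0, M] =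
        ![max (t - x j) 0, M + reluSum k x j t]
  | 0, _ => by simp [hiddenComp, reluSum]
  | j + 1, hM => by
    have ih := hiddenComp_reluSumLayer hx j fun i hi => hM i (by omega)
    have hsum : k j * max (t - x j) 0 + (M + reluSum k x j t) = M + reluSum k x (j + 1) t := by
      rw [reluSum_succ]; ring
    simp only [hiddenComp, Function.comp_apply, ih, reluSumLayer_apply, relu2_vec2, hsum,
      max_max_sub_zero_add_sub_zero (hx j.le_succ), max_eq_left (hM (j + 1) le_rfl)]

theorem exists_isReLUNet2_eqOn_reluSum (hx : Monotone x) (r : ℕ) (c B : ℝ) :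
    ∃ f : ℝ → ℝ, IsReLUNet2 f ∧ Set.EqOn f (fun t => c + reluSum k x r t) (Set.Iic B) := by
  set M := ∑ i ∈ Finset.range r, |k i| * max (B - x i) 0
  let t1 : ℝ →ᵃ[ℝ] (Fin 2 → ℝ) :=
    (LinearMap.toSpanSingleton ℝ _ ![1, 0]).toAffineMap + AffineMap.const ℝ ℝ ![-x 0, M]
  let tL : (Fin 2 → ℝ) →ᵃ[ℝ] ℝ :=
    (LinearMap.proj 1).toAffineMap + AffineMap.const ℝ (Fin 2 → ℝ) (c - M)
  refine ⟨_, ⟨r, t1, reluSumLayer k x, tL, rfl⟩, fun t ht => ?_⟩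
  have hM : ∀ i ≤ r, 0 ≤ M + reluSum k x i t := fun i hi =>
    neg_le_iff_add_nonneg'.1 (abs_le.1 (abs_reluSum_le k x hi ht)).1
  have ht1 : relu2 (t1 t) = ![max (t - x 0) 0, M] := by
    have hM0 : 0 ≤ M := by simpa [reluSum] using hM 0 (Nat.zero_le r)
    ext i; fin_cases i <;> simp [t1, relu2, sub_eq_add_neg, hM0]
  simp only [ht1, hiddenComp_reluSumLayer k hx r hM]
  simp [tL]
  ring

end Network

section Interpolation

variable (x y : ℕ → ℝ) (n : ℕ)

-- Zero past the last node, so that the interpolant is constant to the right of the data.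
noncomputable def chordSlope (q : ℕ) : ℝ :=
  if q + 1 < n then (y (q + 1) - y q) / (x (q + 1) - x q) else 0

-- The ReLU at node `q` accounts for the change of slope there.
noncomputable def interpCoeff : ℕ → ℝ
  | 0 => chordSlope x y n 0
  | q + 1 => chordSlope x y n (q + 1) - chordSlope x y n q

noncomputable def reluInterp (t : ℝ) : ℝ :=
  y 0 + reluSum (interpCoeff x y n) x n t

variable {x y n}

lemma chordSlope_mul_sub (hxs : StrictMonoOn x (Set.Iio n)) {q : ℕ} (hq : q + 1 < n) :
    chordSlope x y n q * (x (q + 1) - x q) = y (q + 1) - y q := by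
  have hlt : x q < x (q + 1) := hxs (by simp only [Set.mem_Iio]; omega) hq (Nat.lt_succ_self q)
  rw [chordSlope, if_pos hq, div_mul_cancel₀ _ (sub_ne_zero.2 hlt.ne')]

lemma reluSum_eq_of_le (hx : Monotone x) (k : ℕ → ℝ) {r m : ℕ} (hrm : r ≤ m) {t : ℝ}
    (ht : t ≤ x r) : reluSum k x m t = reluSum k x r t := by
  induction m, hrm using Nat.le_induction with
  | base => rfl
  | succ m hrm ih =>
    rw [reluSum_succ, ih, max_eq_right (by linarith [hx hrm]), mul_zero, add_zero]

lemma add_reluSum_interpCoeff_of_le (hx : Monotone x) (hxs : StrictMonoOn x (Set.Iio n)) :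
    ∀ q < n, ∀ t, x q ≤ t →
      y 0 + reluSum (interpCoeff x y n) x (q + 1) t =
        y q + chordSlope x y n q * (t - x q)
  | 0, _, t, ht => by simp [reluSum, interpCoeff, max_eq_left (sub_nonneg.2 ht)]
  | q + 1, hq, t, ht => by
    have ih := add_reluSum_interpCoeff_of_le hx hxs q (by omega) t (le_trans (hx q.le_succ) ht)
    rw [reluSum_succ, ← add_assoc, ih, interpCoeff, max_eq_left (sub_nonneg.2 ht)]
    linear_combination chordSlope_mul_sub (y := y) hxs hq

lemma reluInterp_apply (hx : Monotone x) (hxs : StrictMonoOn x (Set.Iio n)) {j : ℕ}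
    (hj : j < n) : reluInterp x y n (x j) = y j := by
  rw [reluInterp, reluSum_eq_of_le hx _ hj (hx j.le_succ),
    add_reluSum_interpCoeff_of_le hx hxs j hj _ le_rfl, sub_self, mul_zero, add_zero]

variable {lo hi : ℝ}

lemma reluInterp_mem_Icc_of_le (hx : Monotone x) (hxs : StrictMonoOn x (Set.Iio n))
    (hy : ∀ j < n, y j ∈ Set.Icc lo hi) :
    ∀ q < n, ∀ t ≤ x q, reluInterp x y n t ∈ Set.Icc lo hi
  | 0, hn, t, ht => by
    rw [reluInterp, reluSum_eq_of_le hx _ (Nat.zero_le n) ht]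
    simpa [reluSum] using hy 0 hn
  | q + 1, hq, t, ht => by
    rcases le_total t (x q) with htq | htq
    · exact reluInterp_mem_Icc_of_le hx hxs hy q (by omega) t htq
    have hlt : x q < x (q + 1) := hxs (by simp only [Set.mem_Iio]; omega) hq (Nat.lt_succ_self q)
    have hθ : (t - x q) / (x (q + 1) - x q) ∈ Set.Icc (0 : ℝ) 1 :=
      ⟨div_nonneg (by linarith) (by linarith), (div_le_one (by linarith)).2 (by linarith)⟩
    have hline :
        reluInterp x y n t = y q + ((t - x q) / (x (q + 1) - x q)) • (y (q + 1) - y q) := by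
      rw [reluInterp, reluSum_eq_of_le hx _ hq.le ht,
        add_reluSum_interpCoeff_of_le hx hxs q (by omega) t htq, chordSlope, if_pos hq,
        smul_eq_mul]
      ring
    rw [hline]
    exact (convex_Icc lo hi).add_smul_sub_mem (hy q (by omega)) (hy (q + 1) hq) hθ

lemma reluInterp_mem_Icc (hx : Monotone x) (hxs : StrictMonoOn x (Set.Iio n)) (hn : 0 < n)
    (hy : ∀ j < n, y j ∈ Set.Icc lo hi) (t : ℝ) : reluInterp x y n t ∈ Set.Icc lo hi := by
  rcases le_total t (x (n - 1)) with ht | ht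
  · exact reluInterp_mem_Icc_of_le hx hxs hy (n - 1) (by omega) t ht
  obtain ⟨m, rfl⟩ : ∃ m, n = m + 1 := ⟨n - 1, by omega⟩
  have hlast : chordSlope x y (m + 1) m = 0 := if_neg (lt_irrefl _)
  rw [reluInterp, add_reluSum_interpCoeff_of_le hx hxs m m.lt_succ_self t ht, hlast, zero_mul,
    add_zero]
  exact hy m m.lt_succ_self

end Interpolation

theorem stmt_11_general (fstar : ℝ → ℝ) (X : Finset ℝ) (hX : X.Nonempty)
    (a b : ℝ) (hXI : (X : Set ℝ) ⊆ Set.Icc a b) :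
    ∃ f : ℝ → ℝ, IsReLUNet2 f ∧ (∀ x ∈ X, f x = fstar x) ∧
      ∀ x ∈ Set.Icc a b, f x ∈ Set.Icc (X.inf' hX fstar) (X.sup' hX fstar) := by
  obtain ⟨x, hx, hxs, hxX⟩ := X.exists_monotone_strictMonoOn_image_eq hX
  have hmem : ∀ j < X.card, x j ∈ X := fun j hj => by
    rw [← Finset.mem_coe, ← hxX]; exact Set.mem_image_of_mem x hj
  let y := fstar ∘ x
  obtain ⟨f, hf, hfeq⟩ :=
    exists_isReLUNet2_eqOn_reluSum (interpCoeff x y X.card) hx X.card (y 0) b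
  refine ⟨f, hf, fun t ht => ?_, fun t ht => ?_⟩
  · obtain ⟨j, hj, rfl⟩ : t ∈ x '' Set.Iio X.card := by rwa [hxX]
    rw [hfeq (hXI (hmem j hj)).2]
    exact reluInterp_apply hx hxs hj
  · rw [hfeq ht.2]
    exact reluInterp_mem_Icc hx hxs hX.card_pos
      (fun j hj => ⟨X.inf'_le fstar (hmem j hj), X.le_sup' fstar (hmem j hj)⟩) t

theorem stmt_11 (fstar : ℝ → ℝ) (X : Finset ℝ) (hX : X.Nonempty)
    (a b : ℝ) (hab : a ≤ b) (hXI : (X : Set ℝ) ⊆ Set.Icc a b) :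
    ∃ f : ℝ → ℝ, IsReLUNet2 f ∧ (∀ x ∈ X, f x = fstar x) ∧
      ∀ x ∈ Set.Icc a b, f x ∈ Set.Icc (X.inf' hX fstar) (X.sup' hX fstar) :=
  stmt_11_general fstar X hX a b hXI
end

section
/- Let d ≥ 1 and 0 < α < 1/2. There exists a continuous function f : ℝ^d → ℝ^d such that f(x) = (1,...,1) for all x ∈ ℝ^d \ [0,1]^d, f(x) = x for all x ∈ [α, 1−α]^d, and f(ℝ^d) ⊆ [0,1]^d; moreover f can be realized as a ReLU network of width d+1. -/
/-- A sequence of layers of a ReLU network with hidden widths bounded by `w`,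
mapping `Fin n → ℝ` to `Fin m → ℝ`. -/
inductive ReLULayers (w : ℕ) : ℕ → ℕ → Type where
  | last (n m : ℕ) (t : (Fin n → ℝ) →ᵃ[ℝ] (Fin m → ℝ)) : ReLULayers w n m
  | cons (n k m : ℕ) (hk : k ≤ w) (t : (Fin n → ℝ) →ᵃ[ℝ] (Fin k → ℝ))
      (rest : ReLULayers w k m) : ReLULayers w n m

/-- Evaluation of a ReLU network: each hidden layer applies an affine map followed by
coordinatewise ReLU, and the last affine map has no activation. -/
def ReLULayers.eval {w n m : ℕ} : ReLULayers w n m → (Fin n → ℝ) → (Fin m → ℝ)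
  | .last _ _ t => fun x => t x
  | .cons _ _ _ _ t rest => fun x => rest.eval (fun i => max (t x i) 0)

/-- `f` is computed by some ReLU network of width at most `w`. -/
def IsReLUNet (w n m : ℕ) (f : (Fin n → ℝ) → (Fin m → ℝ)) : Prop :=
  ∃ net : ReLULayers w n m, f = net.eval

/-! ### Auxiliary material -/

lemma ReLULayers.eval_continuous {w n m : ℕ} (net : ReLULayers w n m) :
    Continuous net.eval := by
  induction net with
  | last n m t => exact t.continuous_of_finiteDimensional.comp continuous_id |>.congr (fun _ => rfl)
  | cons n k m hk t rest ih =>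
      show Continuous fun x => rest.eval (fun i => max (t x i) 0)
      exact ih.comp <| continuous_pi fun i =>
        ((continuous_apply i).comp t.continuous_of_finiteDimensional).max continuous_const

/-- Build an affine map from a linear map and a constant. -/
noncomputable def mkAff {n m : ℕ} (L : (Fin n → ℝ) →ₗ[ℝ] (Fin m → ℝ)) (b : Fin m → ℝ) :
    (Fin n → ℝ) →ᵃ[ℝ] (Fin m → ℝ) :=
  ⟨fun x => L x + b, L, by intro p v; simp [map_add]; abel⟩

@[simp] lemma mkAff_apply {n m : ℕ} (L : (Fin n → ℝ) →ₗ[ℝ] (Fin m → ℝ)) (b : Fin m → ℝ)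
    (x : Fin n → ℝ) : mkAff L b x = L x + b := rfl

/-- Entry layer: `x ↦ (x, 0)`. -/
noncomputable def entryAff (d : ℕ) : (Fin d → ℝ) →ᵃ[ℝ] (Fin (d+1) → ℝ) :=
  mkAff ⟨⟨fun x i => if h : (i : ℕ) < d then x ⟨i, h⟩ else 0, by
    intro x y; funext i; by_cases h : (i : ℕ) < d <;> simp [h]⟩, by
    intro c x; funext i; by_cases h : (i : ℕ) < d <;> simp [h]⟩ 0

/-- Accumulator layer: adds `p * y j + q` to the last coordinate. -/
noncomputable def pAff (d : ℕ) (j : Fin d) (p q : ℝ) :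
    (Fin (d+1) → ℝ) →ᵃ[ℝ] (Fin (d+1) → ℝ) :=
  mkAff ⟨⟨fun y i => if i = Fin.last d then y (Fin.last d) + p * y j.castSucc else y i, by
    intro x y; funext i; by_cases h : i = Fin.last d <;> simp [h] <;> ring⟩, by
    intro c x; funext i; by_cases h : i = Fin.last d <;> simp [h] <;> ring⟩
    (fun i => if i = Fin.last d then q else 0)

lemma pAff_apply (d : ℕ) (j : Fin d) (p q : ℝ) (y : Fin (d+1) → ℝ) (i : Fin (d+1)) :
    pAff d j p q y i =
      if i = Fin.last d then y (Fin.last d) + p * y j.castSucc + q else y i := by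
  simp only [pAff, mkAff_apply, LinearMap.coe_mk, AddHom.coe_mk, Pi.add_apply]
  by_cases h : i = Fin.last d <;> simp [h]

/-- Cap layer: `y ↦ 1 - y`. -/
noncomputable def capAff (d : ℕ) : (Fin (d+1) → ℝ) →ᵃ[ℝ] (Fin (d+1) → ℝ) :=
  mkAff (-LinearMap.id) 1

lemma capAff_apply (d : ℕ) (y : Fin (d+1) → ℝ) (i : Fin (d+1)) :
    capAff d y i = 1 - y i := by
  simp [capAff]; ring

/-- Max layer. -/
noncomputable def maxAff (d : ℕ) : (Fin (d+1) → ℝ) →ᵃ[ℝ] (Fin (d+1) → ℝ) :=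
  mkAff ⟨⟨fun y i => if i = Fin.last d then y i else y (Fin.last d) - y i, by
    intro x y; funext i; by_cases h : i = Fin.last d <;> simp [h] <;> ring⟩, by
    intro c x; funext i; by_cases h : i = Fin.last d <;> simp [h] <;> ring⟩ 0

lemma maxAff_apply (d : ℕ) (y : Fin (d+1) → ℝ) (i : Fin (d+1)) :
    maxAff d y i = if i = Fin.last d then y i else y (Fin.last d) - y i := by
  simp only [maxAff, mkAff_apply, LinearMap.coe_mk, AddHom.coe_mk, Pi.add_apply, Pi.zero_apply,
    add_zero]

/-- Output layer: `z ↦ fun i => z i + 1 - z last`. -/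
noncomputable def outAff (d : ℕ) : (Fin (d+1) → ℝ) →ᵃ[ℝ] (Fin d → ℝ) :=
  mkAff ⟨⟨fun z i => z i.castSucc - z (Fin.last d), by
    intro x y; funext i; simp; ring⟩, by
    intro c x; funext i; simp; ring⟩ 1

lemma outAff_apply (d : ℕ) (z : Fin (d+1) → ℝ) (i : Fin d) :
    outAff d z i = z i.castSucc - z (Fin.last d) + 1 := rfl

/-- Tail of the network: caps coordinates into `[0,1]` and takes max with accumulator. -/
noncomputable def tailNet (d : ℕ) : ReLULayers (d+1) (d+1) d :=
  .cons _ (d+1) _ le_rfl (capAff d) <| .cons _ (d+1) _ le_rfl (maxAff d) <| .last _ _ (outAff d)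

/-- Four layers handling coordinate `j`. -/
noncomputable def coordNet (d : ℕ) (α : ℝ) (j : Fin d) (rest : ReLULayers (d+1) (d+1) d) :
    ReLULayers (d+1) (d+1) d :=
  .cons _ (d+1) _ le_rfl (pAff d j (1/α) (-1)) <|
  .cons _ (d+1) _ le_rfl (pAff d j (-(1/α)) 1) <|
  .cons _ (d+1) _ le_rfl (pAff d j (-(1/α)) ((1-α)/α)) <|
  .cons _ (d+1) _ le_rfl (pAff d j (1/α) (-((1-α)/α))) rest

/-- Accumulation network from coordinate `j` to the end. -/
noncomputable def buildAcc (d : ℕ) (α : ℝ) (j : ℕ) : ReLULayers (d+1) (d+1) d :=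
  if h : j < d then coordNet d α ⟨j, h⟩ (buildAcc d α (j+1)) else tailNet d
termination_by d - j
decreasing_by omega

noncomputable def fullNet (d : ℕ) (α : ℝ) : ReLULayers (d+1) d d :=
  .cons _ (d+1) _ le_rfl (entryAff d) (buildAcc d α 0)

/-- The mathematical accumulator function. -/
noncomputable def gAcc (d : ℕ) (α : ℝ) (u : Fin d → ℝ) (j : ℕ) (m : ℝ) : ℝ :=
  if h : j < d then
    gAcc d α u (j+1) (max (max m (1 - u ⟨j, h⟩ / α)) ((u ⟨j, h⟩ - (1-α))/α))
  else m
termination_by d - j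

lemma relu_sub_add (a b : ℝ) : max (a - b) 0 + b = max a b := by
  rw [← max_add_add_right, sub_add_cancel, zero_add]

lemma one_sub_relu (a : ℝ) : 1 - max (1 - a) 0 = min 1 a := by
  rcases le_total a 1 with h | h
  · rw [max_eq_left (by linarith), min_eq_right h]; ring
  · rw [max_eq_right (by linarith), min_eq_left h]; ring

lemma castSucc_ne_last {d : ℕ} (i : Fin d) : (i.castSucc : Fin (d+1)) ≠ Fin.last d :=
  (Fin.castSucc_lt_last i).ne

lemma scalar_tail (a b : ℝ) :
    max (max (1-b) 0 - max (1-a) 0) 0 - max (1-b) 0 + 1 = max (min 1 a) (min 1 b) := by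
  have hv : max (1-a) 0 = 1 - min 1 a := by rw [← one_sub_relu a]; ring
  have hs : max (1-b) 0 = 1 - min 1 b := by rw [← one_sub_relu b]; ring
  rw [hv, hs, show (1 - min 1 b) - (1 - min 1 a) = min 1 a - min 1 b by ring]
  rcases le_total (min 1 a) (min 1 b) with h | h
  · rw [max_eq_right (by linarith : min 1 a - min 1 b ≤ 0), max_eq_right h]; ring
  · rw [max_eq_left (by linarith : (0:ℝ) ≤ min 1 a - min 1 b), max_eq_left h]; ring

/-- Evaluation of the tail. -/
lemma tailNet_eval (d : ℕ) (y : Fin (d+1) → ℝ) (hy : ∀ i, 0 ≤ y i) :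
    (tailNet d).eval y =
      fun i => max (min 1 (y i.castSucc)) (min 1 (y (Fin.last d))) := by
  simp only [tailNet, ReLULayers.eval]
  funext i
  rw [outAff_apply]
  have e1 : ∀ k, max (capAff d y k) 0 = max (1 - y k) 0 := by
    intro k; rw [capAff_apply]
  have e2 : max (maxAff d (fun k => max (capAff d y k) 0) (Fin.last d)) 0
      = max (1 - y (Fin.last d)) 0 := by
    rw [maxAff_apply, if_pos rfl, e1, max_eq_left (le_max_right _ _)]
  have e3 : max (maxAff d (fun k => max (capAff d y k) 0) i.castSucc) 0
      = max (max (1 - y (Fin.last d)) 0 - max (1 - y i.castSucc) 0) 0 := by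
    rw [maxAff_apply, if_neg (castSucc_ne_last i), e1, e1]
  rw [e2, e3, scalar_tail]

lemma relu_max (c t : ℝ) (hc : 0 ≤ c) : max (max (c - t) 0 + t) 0 = max c t := by
  rw [relu_sub_add, max_eq_left (le_trans hc (le_max_left c t))]

lemma scalar_coord (α u m : ℝ) (hm : 0 ≤ m) :
    max (max (max (max (m + 1/α*u + -1) 0 + -(1/α)*u + 1) 0 + -(1/α)*u + (1-α)/α) 0
        + 1/α*u + -((1-α)/α)) 0
      = max (max m (1 - u/α)) ((u - (1-α))/α) := by
  have h1 : m + 1/α*u + -1 = m - (1 - u/α) := by ring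
  have h2 : ∀ X : ℝ, X + -(1/α)*u + 1 = X + (1 - u/α) := fun X => by ring
  have h3 : ∀ X : ℝ, X + -(1/α)*u + (1-α)/α = X - (u - (1-α))/α := fun X => by ring
  have h4 : ∀ X : ℝ, X + 1/α*u + -((1-α)/α) = X + (u - (1-α))/α := fun X => by ring
  rw [h1, h2, h3, h4, relu_max _ _ hm, relu_max _ _ (le_trans hm (le_max_left _ _))]

/-- Evaluation of the four layers of `coordNet`. -/
lemma coordNet_eval (d : ℕ) (α : ℝ) (j : Fin d) (rest : ReLULayers (d+1) (d+1) d)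
    (y : Fin (d+1) → ℝ) (hy : ∀ i, 0 ≤ y i) :
    (coordNet d α j rest).eval y =
      rest.eval (Function.update y (Fin.last d)
        (max (max (y (Fin.last d)) (1 - y j.castSucc / α)) ((y j.castSucc - (1-α))/α))) := by
  simp only [coordNet, ReLULayers.eval]
  refine congrArg rest.eval (funext fun i => ?_)
  induction i using Fin.lastCases with
  | cast k =>
      rw [Function.update_of_ne (castSucc_ne_last k)]
      simp only [pAff_apply, if_neg (castSucc_ne_last k), if_neg (castSucc_ne_last j),
        max_eq_left (hy k.castSucc)]
  | last =>
      rw [Function.update_self]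
      simp only [pAff_apply, if_pos rfl, if_neg (castSucc_ne_last j),
        max_eq_left (hy j.castSucc), eq_self_iff_true, if_true]
      exact scalar_coord α (y j.castSucc) (y (Fin.last d)) (hy _)

/-- Main evaluation lemma for `buildAcc`. -/
lemma buildAcc_eval (d : ℕ) (α : ℝ) (j : ℕ) (y : Fin (d+1) → ℝ) (hy : ∀ i, 0 ≤ y i) :
    (buildAcc d α j).eval y = fun i =>
      max (min 1 (y i.castSucc))
        (min 1 (gAcc d α (fun k => y k.castSucc) j (y (Fin.last d)))) := by
  rw [buildAcc, gAcc]
  by_cases h : j < d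
  · rw [dif_pos h, dif_pos h]
    rw [coordNet_eval d α ⟨j, h⟩ _ y hy]
    set m' := max (max (y (Fin.last d)) (1 - y (Fin.castSucc ⟨j, h⟩) / α))
      ((y (Fin.castSucc ⟨j, h⟩) - (1-α))/α) with hm'
    have hy' : ∀ i, 0 ≤ Function.update y (Fin.last d) m' i := by
      intro i
      by_cases hi : i = Fin.last d
      · subst hi; rw [Function.update_self]
        exact le_trans (hy _) (le_trans (le_max_left _ _) (le_max_left _ _))
      · rw [Function.update_of_ne hi]; exact hy i
    have hcoord : (fun k : Fin d => Function.update y (Fin.last d) m' k.castSucc)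
        = fun k => y k.castSucc :=
      funext fun k => Function.update_of_ne (castSucc_ne_last k) _ _
    rw [buildAcc_eval d α (j+1) _ hy']
    funext i
    rw [Function.update_of_ne (castSucc_ne_last i), Function.update_self, hcoord]
  · rw [dif_neg h, dif_neg h]
    exact tailNet_eval d y hy
termination_by d - j
decreasing_by omega

lemma le_gAcc (d : ℕ) (α : ℝ) (u : Fin d → ℝ) (j : ℕ) (m : ℝ) : m ≤ gAcc d α u j m := by
  rw [gAcc]
  by_cases h : j < d
  · rw [dif_pos h]
    exact le_trans (le_trans (le_max_left _ _) (le_max_left _ _)) (le_gAcc d α u (j+1) _)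
  · rw [dif_neg h]
termination_by d - j
decreasing_by omega

lemma term_le_gAcc (d : ℕ) (α : ℝ) (u : Fin d → ℝ) (j : ℕ) (m : ℝ) (k : ℕ) (hk : k < d)
    (hjk : j ≤ k) :
    max (1 - u ⟨k, hk⟩ / α) ((u ⟨k, hk⟩ - (1-α))/α) ≤ gAcc d α u j m := by
  rw [gAcc, dif_pos (lt_of_le_of_lt hjk hk)]
  rcases eq_or_lt_of_le hjk with rfl | hlt
  · refine le_trans ?_ (le_gAcc d α u (j+1) _)
    exact max_le (le_trans (le_max_right _ _) (le_max_left _ _)) (le_max_right _ _)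
  · exact term_le_gAcc d α u (j+1) _ k hk hlt
termination_by d - j
decreasing_by omega

lemma gAcc_le (d : ℕ) (α : ℝ) (u : Fin d → ℝ) (j : ℕ) (m : ℝ) (c : ℝ) (hm : m ≤ c)
    (hterm : ∀ (k : ℕ) (hk : k < d), j ≤ k →
      max (1 - u ⟨k, hk⟩ / α) ((u ⟨k, hk⟩ - (1-α))/α) ≤ c) :
    gAcc d α u j m ≤ c := by
  rw [gAcc]
  by_cases h : j < d
  · rw [dif_pos h]
    refine gAcc_le d α u (j+1) _ c ?_ (fun k hk hjk => hterm k hk (by omega))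
    rw [max_assoc]
    exact max_le hm (hterm j h le_rfl)
  · rwa [dif_neg h]
termination_by d - j
decreasing_by omega

theorem stmt_13 (d : ℕ) (hd : 1 ≤ d) (α : ℝ) (hα0 : 0 < α) (hα : α < 1 / 2) :
    ∃ f : (Fin d → ℝ) → (Fin d → ℝ), Continuous f ∧
      (∀ x, x ∉ Set.Icc (0 : Fin d → ℝ) 1 → f x = fun _ => 1) ∧
      (∀ x ∈ Set.Icc (fun _ => α : Fin d → ℝ) (fun _ => 1 - α), f x = x) ∧
      (∀ x, f x ∈ Set.Icc (0 : Fin d → ℝ) 1) ∧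
      IsReLUNet (d + 1) d d f := by
  have hα1 : α ≤ 1 - α := by linarith
  -- the clipped input
  set u : (Fin d → ℝ) → (Fin d → ℝ) := fun x i => max (x i) 0 with hu
  set G : (Fin d → ℝ) → ℝ := fun x => gAcc d α (u x) 0 0 with hG
  have hev : ∀ x, (fullNet d α).eval x =
      fun i => max (min 1 (u x i)) (min 1 (G x)) := by
    intro x
    show (buildAcc d α 0).eval (fun i => max (entryAff d x i) 0) = _
    have hcast : ∀ k : Fin d, max (entryAff d x k.castSucc) 0 = u x k := by
      intro k
      simp [entryAff, mkAff, u]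
    have hlast : max (entryAff d x (Fin.last d)) 0 = 0 := by
      simp [entryAff, mkAff]
    rw [buildAcc_eval d α 0 _ (fun i => le_max_right _ _)]
    funext i
    rw [hcast i, hlast, funext hcast]
  have hG0 : ∀ x, 0 ≤ G x := fun x => le_gAcc d α (u x) 0 0
  refine ⟨(fullNet d α).eval, (fullNet d α).eval_continuous, ?_, ?_, ?_, ⟨fullNet d α, rfl⟩⟩
  · -- outside the unit cube
    intro x hx
    rw [Set.mem_Icc, not_and_or] at hx
    have hG1 : 1 ≤ G x := by
      rcases hx with hx | hx
      · rw [Pi.le_def] at hx; push_neg at hx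
        obtain ⟨i, hi⟩ := hx
        rw [Pi.zero_apply] at hi
        have hui : u x i = 0 := max_eq_right hi.le
        refine le_trans ?_ (term_le_gAcc d α (u x) 0 0 i.val i.isLt (Nat.zero_le _))
        rw [Fin.eta, hui]
        refine le_trans ?_ (le_max_left _ _)
        rw [zero_div]; norm_num
      · rw [Pi.le_def] at hx; push_neg at hx
        obtain ⟨i, hi⟩ := hx
        rw [Pi.one_apply] at hi
        have hui : u x i = x i := max_eq_left (by linarith)
        refine le_trans ?_ (term_le_gAcc d α (u x) 0 0 i.val i.isLt (Nat.zero_le _))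
        rw [Fin.eta, hui]
        refine le_trans ?_ (le_max_right _ _)
        rw [le_div_iff₀ hα0]; linarith
    rw [hev]
    funext i
    rw [min_eq_left hG1, max_eq_right (min_le_left 1 (u x i))]
  · -- the middle cube
    intro x hx
    rw [Set.mem_Icc] at hx
    have hxl : ∀ i, α ≤ x i := fun i => hx.1 i
    have hxr : ∀ i, x i ≤ 1 - α := fun i => hx.2 i
    have hux : u x = x := funext fun i => max_eq_left (le_trans hα0.le (hxl i))
    have hGle : G x ≤ 0 := by
      refine gAcc_le d α (u x) 0 0 0 le_rfl ?_
      intro k hk _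
      rw [hux]
      refine max_le ?_ ?_
      · have h1 : 1 ≤ x ⟨k, hk⟩ / α := (one_le_div hα0).mpr (hxl ⟨k, hk⟩)
        linarith
      · have h2 : x ⟨k, hk⟩ - (1 - α) ≤ 0 := by linarith [hxr ⟨k, hk⟩]
        exact div_nonpos_of_nonpos_of_nonneg h2 hα0.le
    have hGx : G x = 0 := le_antisymm hGle (hG0 x)
    rw [hev]
    funext i
    rw [hux, hGx, min_eq_right zero_le_one,
      min_eq_right (by linarith [hxr i] : x i ≤ (1:ℝ)),
      max_eq_left (le_trans hα0.le (hxl i))]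
  · -- values in the unit cube
    intro x
    rw [hev, Set.mem_Icc]
    constructor
    · intro i
      rw [Pi.zero_apply]
      exact le_trans (le_min zero_le_one (le_max_right (x i) 0)) (le_max_left _ _)
    · intro i
      rw [Pi.one_apply]
      exact max_le (min_le_left _ _) (min_le_left _ _)
end

section
/- Let p ∈ [1, ∞) and let f : ℝ^d → ℝ be continuous. Suppose there exists an unbounded connected set T ⊆ ℝ^d and a constant c > 0 such that |f(x)| ≥ c for all x within ℓ_∞ distance δ of T, for some δ > 0. Then ∫_{ℝ^d} |f(x)|^p dx = ∞, i.e., f ∉ L^p(ℝ^d). -/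
open Bornology MeasureTheory Metric
open scoped ENNReal

theorem stmt_15 (d : ℕ) (hd : 1 ≤ d) (p : ℝ) (hp : 1 ≤ p)
    (f : (Fin d → ℝ) → ℝ) (hf : Continuous f)
    (T : Set (Fin d → ℝ)) (hTconn : IsConnected T) (hTunbdd : ¬ IsBounded T)
    (c δ : ℝ) (hc : 0 < c) (hδ : 0 < δ)
    (hbig : ∀ x' : Fin d → ℝ, (∃ x ∈ T, ‖x' - x‖ ≤ δ) → c ≤ |f x'|) :
    ∫⁻ x, ENNReal.ofReal (|f x| ^ p) = ⊤ := by
  -- unboundedness in terms of norms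
  have hunb : ∀ C : ℝ, ∃ x ∈ T, C < ‖x‖ := by
    intro C
    by_contra h
    push_neg at h
    exact hTunbdd (isBounded_iff_forall_norm_le.2 ⟨C, h⟩)
  obtain ⟨x₀, hx₀⟩ := hTconn.nonempty
  set a := ‖x₀‖ with ha
  -- image of T under norm is ord-connected
  have hS : IsPreconnected ((fun x : Fin d → ℝ => ‖x‖) '' T) :=
    hTconn.isPreconnected.image _ continuous_norm.continuousOn
  have hSo := hS.ordConnected
  -- choose points at prescribed norms
  have hy : ∀ n : ℕ, ∃ y ∈ T, ‖y‖ = a + n * (2 * δ + 1) := by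
    intro n
    obtain ⟨z, hz, hzn⟩ := hunb (a + n * (2 * δ + 1))
    have hn0 : (0 : ℝ) ≤ n := Nat.cast_nonneg n
    have : a + n * (2 * δ + 1) ∈ (fun x : Fin d → ℝ => ‖x‖) '' T :=
      hSo.out ⟨x₀, hx₀, rfl⟩ ⟨z, hz, rfl⟩
        ⟨by nlinarith, le_of_lt hzn⟩
    obtain ⟨y, hyT, hyn⟩ := this
    exact ⟨y, hyT, hyn⟩
  choose y hyT hyn using hy
  -- disjoint balls
  set U : Set (Fin d → ℝ) := ⋃ n, ball (y n) δ with hU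
  have hdisj : Pairwise (Function.onFun Disjoint fun n => ball (y n) δ) := by
    intro n m hnm
    rw [Function.onFun, Set.disjoint_left]
    intro x hxn hxm
    have h1 : dist x (y n) < δ := mem_ball.1 hxn
    have h2 : dist x (y m) < δ := mem_ball.1 hxm
    have h3 : dist (y n) (y m) < 2 * δ := by
      calc dist (y n) (y m) ≤ dist (y n) x + dist x (y m) := dist_triangle _ _ _
        _ < δ + δ := by rw [dist_comm (y n) x]; linarith
        _ = 2 * δ := by ring
    have h4 : |‖y n‖ - ‖y m‖| ≤ dist (y n) (y m) := abs_norm_sub_norm_le _ _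
    have h5 : ‖y n‖ - ‖y m‖ = ((n : ℝ) - m) * (2 * δ + 1) := by
      rw [hyn, hyn]; ring
    have h6 : (1 : ℝ) ≤ |(n : ℝ) - m| := by
      have : (n : ℝ) ≠ m := by exact_mod_cast fun h => hnm (Nat.cast_injective h)
      have h7 : ((n : ℤ) : ℝ) - ((m : ℤ) : ℝ) = ((n - m : ℤ) : ℝ) := by push_cast; ring
      have h8 : (n - m : ℤ) ≠ 0 := sub_ne_zero.2 (by exact_mod_cast this)
      calc (1 : ℝ) = ((1 : ℤ) : ℝ) := by norm_num
        _ ≤ |((n - m : ℤ) : ℝ)| := by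
            rw [← Int.cast_abs]; exact_mod_cast Int.one_le_abs h8
        _ = |(n : ℝ) - m| := by push_cast; ring_nf
    have : 2 * δ + 1 ≤ |‖y n‖ - ‖y m‖| := by
      rw [h5, abs_mul, abs_of_nonneg (by linarith : (0:ℝ) ≤ 2 * δ + 1)]
      nlinarith
    linarith
  have hmeas : ∀ n : ℕ, MeasurableSet (ball (y n) δ) := fun n =>
    measurableSet_ball
  -- U has infinite volume
  have hvol : volume U = ⊤ := by
    rw [hU, measure_iUnion hdisj hmeas]
    have hb : ∀ n : ℕ, volume (ball (y n) δ) =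
        ENNReal.ofReal ((2 * δ) ^ Fintype.card (Fin d)) := fun n =>
      Real.volume_pi_ball (y n) hδ
    rw [tsum_congr hb]
    apply ENNReal.tsum_const_eq_top_of_ne_zero
    simp only [ne_eq, ENNReal.ofReal_eq_zero, not_le]
    positivity
  -- lower bound on the integrand on U
  have hlow : ∀ x ∈ U, ENNReal.ofReal (c ^ p) ≤ ENNReal.ofReal (|f x| ^ p) := by
    intro x hx
    obtain ⟨_, ⟨n, rfl⟩, hxn⟩ := hx
    have hd : ‖x - y n‖ ≤ δ := by
      rw [← dist_eq_norm]
      exact le_of_lt (mem_ball.1 hxn)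
    have hcf : c ≤ |f x| := hbig x ⟨y n, hyT n, hd⟩
    exact ENNReal.ofReal_le_ofReal
      (Real.rpow_le_rpow hc.le hcf (by linarith))
  have hgmeas : Measurable fun x => ENNReal.ofReal (|f x| ^ p) :=
    ((hf.abs.rpow_const fun x => Or.inr (by linarith)).measurable).ennreal_ofReal
  have : (⊤ : ℝ≥0∞) ≤ ∫⁻ x, ENNReal.ofReal (|f x| ^ p) := by
    calc (⊤ : ℝ≥0∞) = ENNReal.ofReal (c ^ p) * volume U := by
          rw [hvol, ENNReal.mul_top]
          simp only [ne_eq, ENNReal.ofReal_eq_zero, not_le]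
          positivity
      _ = ∫⁻ _ in U, ENNReal.ofReal (c ^ p) := (setLIntegral_const U _).symm
      _ ≤ ∫⁻ x in U, ENNReal.ofReal (|f x| ^ p) := setLIntegral_mono hgmeas hlow
      _ ≤ ∫⁻ x, ENNReal.ofReal (|f x| ^ p) := setLIntegral_le_lintegral U _
  exact top_le_iff.1 this
end

section
/- Let f* : [0,1]^d → ℝ be defined by f*(x) = Σ_{i=1}^{d} (x_i − 1/2)². Suppose f : [0,1]^d → ℝ is continuous, satisfies ‖f* − f‖_∞ ≤ 1/16 (sup over [0,1]^d), and has the property that the connected component of the level set f^{-1}(f(c)) containing the center c = (1/2,...,1/2), taken in ℝ^d for some continuous extension of f to ℝ^d, is unbounded. Then we obtain a contradiction: no such f exists. Formally: if f : ℝ^d → ℝ is continuous, sup_{x∈[0,1]^d} |f*(x) − f(x)| ≤ 1/16, then every connected component of f^{-1}(f(c)) containing c is contained in the open Euclidean ball of radius 1/2 around c, hence bounded. -/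
/-! Since `f` is `1/16`-close to `f* = ‖· - c‖²` on the cube, `|f c| ≤ 1/16` while `f ≥ 1/4 - 1/16`
on the sphere of radius `1/2` about `c`, which lies in the cube. So the level set of `f c` misses
that sphere, and a connected subset of it through `c` cannot get out of the ball. -/

open Metric Set

theorem IsPreconnected.inter_sphere_nonempty_of_not_subset_ball {X : Type*} [PseudoMetricSpace X]
    {S : Set X} (hS : IsPreconnected S) {c : X} (hc : c ∈ S) {r : ℝ} (hr : 0 ≤ r)
    (hout : ¬S ⊆ ball c r) : (S ∩ sphere c r).Nonempty := by
  obtain ⟨x, hxS, hx⟩ := not_subset.mp hout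
  rw [mem_ball, not_lt] at hx
  have hIcc : Icc (dist c c) (dist x c) ⊆ (dist · c) '' S :=
    hS.intermediate_value hc hxS (continuous_id.dist continuous_const).continuousOn
  obtain ⟨y, hyS, hy⟩ := hIcc ⟨by simpa using hr, hx⟩
  exact ⟨y, hyS, hy⟩

namespace EuclideanSpace

variable {ι : Type*} [Fintype ι]

theorem sum_sq_sub_const_eq_dist_sq (y : EuclideanSpace ℝ ι) (a : ℝ) :
    ∑ i, (y i - a) ^ 2 = dist y (WithLp.toLp 2 fun _ => a) ^ 2 := by
  simp [PiLp.dist_sq_eq_of_L2, Real.dist_eq, sq_abs]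

theorem apply_mem_Icc_of_dist_const_le {y : EuclideanSpace ℝ ι} {a r : ℝ}
    (h : dist y (WithLp.toLp 2 fun _ => a) ≤ r) (i : ι) : y i ∈ Icc (a - r) (a + r) := by
  rw [← Real.closedBall_eq_Icc, mem_closedBall]
  exact (PiLp.dist_apply_le y _ i).trans h

end EuclideanSpace

theorem stmt_19_general (d : ℕ)
    (f : EuclideanSpace ℝ (Fin d) → ℝ)
    (happrox : ∀ x : EuclideanSpace ℝ (Fin d), (∀ i, x i ∈ Set.Icc (0:ℝ) 1) →
      |(∑ i, (x i - 1 / 2) ^ 2) - f x| ≤ 1 / 16)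
    (c : EuclideanSpace ℝ (Fin d)) (hc : c = WithLp.toLp 2 (fun _ => 1 / 2)) :
    ∀ S : Set (EuclideanSpace ℝ (Fin d)), IsConnected S → S ⊆ f ⁻¹' {f c} → c ∈ S →
      S ⊆ Metric.ball c (1 / 2) := by
  intro S hS hlevel hcS
  by_contra hout
  obtain ⟨y, hyS, hy⟩ := hS.isPreconnected.inter_sphere_nonempty_of_not_subset_ball hcS
    (by norm_num) hout
  have hfy : f y = f c := hlevel hyS
  have hcube : ∀ x, dist x c ≤ 1 / 2 → ∀ i, x i ∈ Icc (0:ℝ) 1 := fun x hx i => by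
    convert EuclideanSpace.apply_mem_Icc_of_dist_const_le (hc ▸ hx) i using 2 <;> norm_num
  have hy_approx := happrox y (hcube y (mem_sphere.mp hy).le)
  have hc_approx := happrox c (hcube c (by simp))
  rw [EuclideanSpace.sum_sq_sub_const_eq_dist_sq, ← hc, mem_sphere.mp hy, hfy] at hy_approx
  rw [EuclideanSpace.sum_sq_sub_const_eq_dist_sq, ← hc, dist_self] at hc_approx
  rw [abs_le] at hy_approx hc_approx
  linarith [hy_approx.1, hc_approx.2]

theorem stmt_19 (d : ℕ) (hd : 1 ≤ d)
    (f : EuclideanSpace ℝ (Fin d) → ℝ) (hf : Continuous f)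
    (happrox : ∀ x : EuclideanSpace ℝ (Fin d), (∀ i, x i ∈ Set.Icc (0:ℝ) 1) →
      |(∑ i, (x i - 1 / 2) ^ 2) - f x| ≤ 1 / 16)
    (c : EuclideanSpace ℝ (Fin d)) (hc : c = WithLp.toLp 2 (fun _ => 1 / 2)) :
    ∀ S : Set (EuclideanSpace ℝ (Fin d)), IsConnected S → S ⊆ f ⁻¹' {f c} → c ∈ S →
      S ⊆ Metric.ball c (1 / 2) :=
  stmt_19_general d f happrox c hc
end
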